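/- arXiv:1808.02464 — 11 statements merged into one kernel-verified Lean document; each statement's English description precedes it below -/
import Mathlib

section
/- Let z, w, u ∈ ℝ² be pairwise distinct. Then ⟨(z−w)/|z−w|², (z−u)/|z−u|²⟩ − ⟨(z−w)/|z−w|², (w−u)/|w−u|²⟩ − ⟨(z−u)/|z−u|², (u−w)/|u−w|²⟩ = 2(|z−w|²·|z−u|² − ⟨z−w, z−u⟩²) / (|z−w|²·|z−u|²·|w−u|²). (The right-hand side equals 2/D²(z−w, z−u), where D(ξ,η) denotes the diameter of the circumcircle of the triangle with vertices 0, ξ, η in ℝ².) -/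
open RealInnerProductSpace

-- Every term is a rational function of `‖a‖², ‖b‖², ⟪a, b⟫`,
-- because `‖b - a‖² = ‖b‖² - 2⟪a, b⟫ + ‖a‖²`.
theorem inner_inv_norm_sq_smul_sub_inner_inv_norm_sq_smul_sub
    {E : Type*} [NormedAddCommGroup E] [InnerProductSpace ℝ E]
    {a b : E} (ha : a ≠ 0) (hb : b ≠ 0) (hab : b - a ≠ 0) :
    ⟪(‖a‖ ^ 2)⁻¹ • a, (‖b‖ ^ 2)⁻¹ • b⟫
      - ⟪(‖a‖ ^ 2)⁻¹ • a, (‖b - a‖ ^ 2)⁻¹ • (b - a)⟫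
      - ⟪(‖b‖ ^ 2)⁻¹ • b, (‖a - b‖ ^ 2)⁻¹ • (a - b)⟫
    = 2 * (‖a‖ ^ 2 * ‖b‖ ^ 2 - ⟪a, b⟫ ^ 2) / (‖a‖ ^ 2 * ‖b‖ ^ 2 * ‖b - a‖ ^ 2) := by
  have hC : ‖b - a‖ ^ 2 = ‖b‖ ^ 2 - 2 * ⟪a, b⟫ + ‖a‖ ^ 2 := by
    rw [norm_sub_sq_real, real_inner_comm]
  rw [norm_sub_rev a b]
  simp only [real_inner_smul_left, real_inner_smul_right, inner_sub_right,
    real_inner_self_eq_norm_sq, real_inner_comm a b]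
  field_simp [hab]
  rw [hC]
  ring

/-- The pointwise circumcircle identity (Lemma 9.1 of the paper): for pairwise distinct
`z, w, u ∈ ℝ²`, the combination of inner products of normalized differences equals
`2 / D²(z − w, z − u)` where `D` is the circumcircle diameter. -/
theorem circumcircle_identity (z w u : EuclideanSpace ℝ (Fin 2))
    (hzw : z ≠ w) (hzu : z ≠ u) (hwu : w ≠ u) :
    ⟪(‖z - w‖ ^ 2)⁻¹ • (z - w), (‖z - u‖ ^ 2)⁻¹ • (z - u)⟫
      - ⟪(‖z - w‖ ^ 2)⁻¹ • (z - w), (‖w - u‖ ^ 2)⁻¹ • (w - u)⟫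
      - ⟪(‖z - u‖ ^ 2)⁻¹ • (z - u), (‖u - w‖ ^ 2)⁻¹ • (u - w)⟫
    = 2 * (‖z - w‖ ^ 2 * ‖z - u‖ ^ 2 - ⟪z - w, z - u⟫ ^ 2)
        / (‖z - w‖ ^ 2 * ‖z - u‖ ^ 2 * ‖w - u‖ ^ 2) := by
  have h := inner_inv_norm_sq_smul_sub_inner_inv_norm_sq_smul_sub
    (sub_ne_zero.2 hzw) (sub_ne_zero.2 hzu) (by rwa [sub_sub_sub_cancel_left, sub_ne_zero])
  simpa only [sub_sub_sub_cancel_left] using h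
end

section
/- Let N ≥ 2, let x¹, …, xᴺ ∈ ℝ be pairwise distinct, and fix 1 ≤ i ≤ N. Then 2 · ∑_{k≠i} ∑_{ℓ≠k, ℓ≠i} 1/((x^k − x^ℓ)(x^i − x^k)) = ∑_{k≠i} ∑_{ℓ≠i, ℓ≠k} 1/((x^i − x^k)(x^i − x^ℓ)), where all sums range over indices in {1,…,N} subject to the indicated exclusions. -/
/-! Swapping `k` and `l` in the left-hand double sum and averaging, each unordered pair
contributes `1/(x^k - x^ℓ) · (1/(x^i - x^k) - 1/(x^i - x^ℓ)) = 1/((x^i - x^k)(x^i - x^ℓ))`. -/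

open Finset

theorem Finset.sum_sum_erase_swap {α β : Type*} [DecidableEq α] [AddCommMonoid β]
    (s : Finset α) (f : α → α → β) :
    ∑ k ∈ s, ∑ l ∈ s.erase k, f l k = ∑ k ∈ s, ∑ l ∈ s.erase k, f k l :=
  (Finset.sum_comm' fun _ _ => by simp only [mem_erase]; tauto).symm

theorem inv_sub_mul_sub_add_inv_sub_mul_sub {K : Type*} [Field K] {a b c : K}
    (hab : a ≠ b) (hac : a ≠ c) (hbc : b ≠ c) :
    ((c - b) * (a - c))⁻¹ + ((b - c) * (a - b))⁻¹ = ((a - b) * (a - c))⁻¹ := by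
  have hab' : a - b ≠ 0 := sub_ne_zero.mpr hab
  have hac' : a - c ≠ 0 := sub_ne_zero.mpr hac
  have hbc' : b - c ≠ 0 := sub_ne_zero.mpr hbc
  have hcb' : c - b ≠ 0 := sub_ne_zero.mpr hbc.symm
  field_simp
  ring

theorem basic_algebra_identity_general (N : ℕ) (x : Fin N → ℝ)
    (hx : Function.Injective x) (i : Fin N) :
    2 * ∑ k ∈ univ.erase i, ∑ l ∈ (univ.erase i).erase k,
        ((x k - x l) * (x i - x k))⁻¹
    = ∑ k ∈ univ.erase i, ∑ l ∈ (univ.erase i).erase k,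
        ((x i - x k) * (x i - x l))⁻¹ := by
  rw [two_mul]
  nth_rewrite 1 [← Finset.sum_sum_erase_swap]
  rw [← sum_add_distrib]
  refine sum_congr rfl fun k hk => ?_
  rw [← sum_add_distrib]
  refine sum_congr rfl fun l hl => ?_
  obtain ⟨hlk, hli, -⟩ : l ≠ k ∧ l ≠ i ∧ l ∈ univ := by simpa only [mem_erase] using hl
  exact inv_sub_mul_sub_add_inv_sub_mul_sub (hx.ne (mem_erase.mp hk).1.symm) (hx.ne hli.symm)
    (hx.ne hlk.symm)

/-- The algebraic symmetrization identity \eqref{basicalgebra}: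
`2 ∑_{k≠i} ∑_{ℓ≠k,i} 1/((x^k − x^ℓ)(x^i − x^k)) = ∑_{k≠i} ∑_{ℓ≠i,k} 1/((x^i − x^k)(x^i − x^ℓ))`. -/
theorem basic_algebra_identity (N : ℕ) (hN : 2 ≤ N) (x : Fin N → ℝ)
    (hx : Function.Injective x) (i : Fin N) :
    2 * ∑ k ∈ univ.erase i, ∑ l ∈ (univ.erase i).erase k,
        ((x k - x l) * (x i - x k))⁻¹
    = ∑ k ∈ univ.erase i, ∑ l ∈ (univ.erase i).erase k,
        ((x i - x k) * (x i - x l))⁻¹ :=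
  basic_algebra_identity_general N x hx i
end

section
/- Let N ≥ 2 and let x¹, …, xᴺ ∈ ℝ be pairwise distinct. Then ∑_{i=1}^N ∑_{k≠i} 1/(x^i − x^k)² = ∑_{i=1}^N ( ∑_{k≠i} 1/(x^i − x^k) )². -/
/-!
Write `a i k = (x i - x k)⁻¹`. Expanding the squares, the right-hand side is the left-hand side
plus the sum of `a i k * a i l` over pairwise distinct triples `(i, k, l)`. That sum is invariant
under cyclic relabelling of the triple, so it is a third of the sum of
`a i k * a i l + a k l * a k i + a l i * a l k`, which vanishes identically by partial fractions.
-/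

open Finset

theorem inv_sub_mul_inv_sub_add_cyclic {K : Type*} [Field K] {a b c : K}
    (hab : a ≠ b) (hbc : b ≠ c) (hca : c ≠ a) :
    (a - b)⁻¹ * (a - c)⁻¹ + (b - c)⁻¹ * (b - a)⁻¹ + (c - a)⁻¹ * (c - b)⁻¹
      = 0 := by
  have := sub_ne_zero.2 hab; have := sub_ne_zero.2 hbc; have := sub_ne_zero.2 hca
  have := sub_ne_zero.2 hab.symm; have := sub_ne_zero.2 hbc.symm
  have := sub_ne_zero.2 hca.symm
  field_simp
  ring

theorem sum_sum_sum_eq_zero_of_cyclic {ι M : Type*} [Fintype ι] [AddCommMonoid M]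
    [IsAddTorsionFree M] (f : ι → ι → ι → M)
    (hf : ∀ i j k, f i j k + f j k i + f k i j = 0) :
    ∑ i, ∑ j, ∑ k, f i j k = 0 := by
  have h₁ : ∑ i, ∑ j, ∑ k, f j k i = ∑ i, ∑ j, ∑ k, f i j k := by
    rw [sum_comm]; exact sum_congr rfl fun _ _ => sum_comm
  have h₂ : ∑ i, ∑ j, ∑ k, f k i j = ∑ i, ∑ j, ∑ k, f i j k := by
    simp_rw [sum_comm (s := univ) (t := univ) (f := fun j k => f k _ j)]
    exact sum_comm
  refine IsAddTorsionFree.nsmul_right_injective (n := 3) three_ne_zero ?_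
  simp only [smul_zero]
  calc 3 • ∑ i, ∑ j, ∑ k, f i j k
      = (∑ i, ∑ j, ∑ k, f i j k) + (∑ i, ∑ j, ∑ k, f j k i)
          + ∑ i, ∑ j, ∑ k, f k i j := by
        rw [h₁, h₂, succ_nsmul, succ_nsmul, one_nsmul]
    _ = 0 := by simp only [← sum_add_distrib, hf, sum_const_zero]

theorem sq_sum_eq_sum_sq_add_sum_sum_ite {ι R : Type*} [Fintype ι] [DecidableEq ι]
    [CommSemiring R] (f : ι → R) :
    (∑ k, f k) ^ 2 = ∑ k, f k ^ 2 + ∑ k, ∑ l, if k = l then 0 else f k * f l := by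
  rw [sq, sum_mul_sum, ← sum_add_distrib]
  refine sum_congr rfl fun k _ => ?_
  rw [← add_sum_erase _ _ (mem_univ k), sq]
  simp [sum_ite, filter_ne]

theorem sum_sum_sum_ite_inv_sub_mul_inv_sub_eq_zero {ι K : Type*} [Fintype ι] [DecidableEq ι]
    [Field K] [CharZero K] {x : ι → K} (hx : Function.Injective x) :
    ∑ i, ∑ j, ∑ k, (if j = k then 0 else (x i - x j)⁻¹ * (x i - x k)⁻¹) = 0 := by
  -- degenerate triples contribute `0` because `(x i - x i)⁻¹ = 0`
  refine sum_sum_sum_eq_zero_of_cyclic _ fun i j k => ?_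
  by_cases hij : i = j
  · subst hij; simp
  by_cases hjk : j = k
  · subst hjk; simp
  by_cases hki : k = i
  · subst hki; simp
  simpa [hij, hjk, hki] using
    inv_sub_mul_inv_sub_add_cyclic (hx.ne hij) (hx.ne hjk) (hx.ne hki)

theorem sum_sum_erase_inv_sub_sq_eq_sum_sq_sum_erase_inv_sub {ι K : Type*} [Fintype ι]
    [DecidableEq ι] [Field K] [CharZero K] {x : ι → K} (hx : Function.Injective x) :
    ∑ i, ∑ k ∈ univ.erase i, ((x i - x k) ^ 2)⁻¹
      = ∑ i, (∑ k ∈ univ.erase i, (x i - x k)⁻¹) ^ 2 := by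
  have sum_erase_diag (f : K → K) (hf : f 0 = 0) (i : ι) :
      ∑ k ∈ univ.erase i, f (x i - x k) = ∑ k, f (x i - x k) :=
    sum_erase _ (by simp [hf])
  rw [sum_congr rfl fun i _ => sum_erase_diag (fun t => (t ^ 2)⁻¹) (by simp) i,
    sum_congr rfl fun i _ => congrArg (· ^ 2) (sum_erase_diag (·⁻¹) inv_zero i)]
  simp only [sq_sum_eq_sum_sq_add_sum_sum_ite, sum_add_distrib,
    sum_sum_sum_ite_inv_sub_mul_inv_sub_eq_zero hx, add_zero, inv_pow]

theorem key_identity_two_general (N : ℕ) (x : Fin N → ℝ)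
    (hx : Function.Injective x) :
    ∑ i, ∑ k ∈ univ.erase i, ((x i - x k) ^ 2)⁻¹
    = ∑ i, (∑ k ∈ univ.erase i, (x i - x k)⁻¹) ^ 2 :=
  sum_sum_erase_inv_sub_sq_eq_sum_sq_sum_erase_inv_sub hx

/-- The algebraic identity \eqref{keyidentity2}:
`∑_{i=1}^N ∑_{k≠i} 1/(x^i − x^k)² = ∑_{i=1}^N (∑_{k≠i} 1/(x^i − x^k))²`. -/
theorem key_identity_two (N : ℕ) (hN : 2 ≤ N) (x : Fin N → ℝ)
    (hx : Function.Injective x) :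
    ∑ i, ∑ k ∈ univ.erase i, ((x i - x k) ^ 2)⁻¹
    = ∑ i, (∑ k ∈ univ.erase i, (x i - x k)⁻¹) ^ 2 :=
  key_identity_two_general N x hx
end

section
/- Let N ≥ 2, σ ≥ 0, β ∈ ℝ, and set C₂ := β(3β/2 − 2σ²)/4. For 1 ≤ i ≤ N define on the open Weyl chamber 𝒲^N: v^{N,i}(x) := (x^i)²/4 − (β/(2(N−1))) ∑_{k≠i} log|x^i − x^k|, F^{N,i}(x) := (x^i)²/8 + (C₂/(N−1)²) ∑_{k≠i} 1/(x^i − x^k)², and λ^{N,i} := β/4 + σ²/(4(N−1)). Then each v^{N,i} is infinitely differentiable on 𝒲^N, and for every x ∈ 𝒲^N and every 1 ≤ i ≤ N: −(σ²/(2(N−1))) ∑_{k=1}^N ∂_k² v^{N,i}(x) + ∑_{k≠i} ∂_k v^{N,k}(x) · ∂_k v^{N,i}(x) + (1/2)(∂_i v^{N,i}(x))² = F^{N,i}(x) − λ^{N,i}, where ∂_k denotes the partial derivative with respect to the k-th coordinate. -/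
open Finset

/-- Partial derivative of `f : ℝᴺ → ℝ` with respect to the `k`-th coordinate. -/
noncomputable def pderivCoord {N : ℕ} (f : (Fin N → ℝ) → ℝ) (k : Fin N)
    (x : Fin N → ℝ) : ℝ :=
  deriv (fun t => f (Function.update x k t)) (x k)

lemma three_point (a b c : ℝ) (hab : a ≠ b) (hac : a ≠ c) (hbc : b ≠ c) :
    (b - c)⁻¹ * (a - b)⁻¹ + (c - b)⁻¹ * (a - c)⁻¹ = (a - b)⁻¹ * (a - c)⁻¹ := by
  have h1 : a - b ≠ 0 := sub_ne_zero.mpr hab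
  have h2 : a - c ≠ 0 := sub_ne_zero.mpr hac
  have h3 : b - c ≠ 0 := sub_ne_zero.mpr hbc
  have h4 : c - b ≠ 0 := sub_ne_zero.mpr hbc.symm
  field_simp
  ring

lemma sum_erase_comm {N : ℕ} (e : Finset (Fin N)) (g : Fin N → Fin N → ℝ) :
    ∑ k ∈ e, ∑ j ∈ e.erase k, g k j = ∑ k ∈ e, ∑ j ∈ e.erase k, g j k := by
  refine Finset.sum_comm' ?_
  intro x y
  simp only [Finset.mem_erase]
  constructor
  · rintro ⟨h1, h2, h3⟩; exact ⟨⟨h2.symm, h1⟩, h3⟩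
  · rintro ⟨⟨h1, h2⟩, h3⟩; exact ⟨h2, h1.symm, h3⟩

lemma cross_term (c p q R : ℝ) (h : p - q ≠ 0) :
    (q / 2 - c * ((q - p)⁻¹ + R)) * (c * (p - q)⁻¹)
      = (c * p / 2) * (p - q)⁻¹ - c / 2 + c ^ 2 * ((p - q) ^ 2)⁻¹
        - c ^ 2 * (R * (p - q)⁻¹) := by
  have h2 : q - p ≠ 0 := sub_ne_zero.mpr (sub_ne_zero.mp h).symm
  field_simp
  ring

lemma pderiv_off {N : ℕ} (c : ℝ) (i k : Fin N) (hik : k ≠ i) (y : Fin N → ℝ)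
    (hy : y i ≠ y k) :
    pderivCoord (fun z => (z i) ^ 2 / 4
      - c * ∑ m ∈ univ.erase i, Real.log |z i - z m|) k y
      = c * (y i - y k)⁻¹ := by
  unfold pderivCoord
  have hk : k ∈ univ.erase i := Finset.mem_erase.mpr ⟨hik, mem_univ k⟩
  have hfun : (fun t => ((Function.update y k t) i) ^ 2 / 4
      - c * ∑ m ∈ univ.erase i,
          Real.log |(Function.update y k t) i - (Function.update y k t) m|)
    = fun t => (y i) ^ 2 / 4 - c * (Real.log (y i - t)
        + ∑ m ∈ (univ.erase i).erase k, Real.log (y i - y m)) := by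
    funext t
    rw [Function.update_of_ne hik.symm]
    congr 2
    rw [← Finset.add_sum_erase _ _ hk]
    congr 1
    · rw [Function.update_self, Real.log_abs]
    · refine Finset.sum_congr rfl fun m hm => ?_
      rw [Function.update_of_ne (Finset.ne_of_mem_erase hm), Real.log_abs]
  rw [hfun]
  have h1 : HasDerivAt (fun t : ℝ => y i - t) (-1) (y k) := by
    simpa using (hasDerivAt_id (y k)).const_sub (y i)
  have h2 : HasDerivAt (fun t : ℝ => Real.log (y i - t)) ((y i - y k)⁻¹ * (-1)) (y k) :=
    (Real.hasDerivAt_log (sub_ne_zero.mpr hy)).comp (y k) h1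
  have h3 := ((h2.add_const (∑ m ∈ (univ.erase i).erase k, Real.log (y i - y m))).const_mul
    c).const_sub ((y i) ^ 2 / 4)
  rw [h3.deriv]
  ring

lemma pderiv_diag {N : ℕ} (c : ℝ) (i : Fin N) (y : Fin N → ℝ)
    (hy : ∀ m ∈ univ.erase i, y i ≠ y m) :
    pderivCoord (fun z => (z i) ^ 2 / 4
      - c * ∑ m ∈ univ.erase i, Real.log |z i - z m|) i y
      = y i / 2 - c * ∑ m ∈ univ.erase i, (y i - y m)⁻¹ := by
  unfold pderivCoord
  have hfun : (fun t => ((Function.update y i t) i) ^ 2 / 4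
      - c * ∑ m ∈ univ.erase i,
          Real.log |(Function.update y i t) i - (Function.update y i t) m|)
    = fun t => t ^ 2 / 4 - c * ∑ m ∈ univ.erase i, Real.log (t - y m) := by
    funext t
    rw [Function.update_self]
    congr 2
    refine Finset.sum_congr rfl fun m hm => ?_
    rw [Function.update_of_ne (Finset.ne_of_mem_erase hm), Real.log_abs]
  rw [hfun]
  have hsum : HasDerivAt (fun t => ∑ m ∈ univ.erase i, Real.log (t - y m))
      (∑ m ∈ univ.erase i, (y i - y m)⁻¹) (y i) := by
    refine HasDerivAt.fun_sum fun m hm => ?_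
    have h1 : HasDerivAt (fun t : ℝ => t - y m) 1 (y i) := by
      simpa using (hasDerivAt_id (y i)).sub_const (y m)
    have := (Real.hasDerivAt_log (sub_ne_zero.mpr (hy m hm))).comp (y i) h1
    exact this.congr_deriv (mul_one _)
  have hq : HasDerivAt (fun t : ℝ => t ^ 2 / 4) (y i / 2) (y i) := by
    have := (hasDerivAt_pow 2 (y i)).div_const 4
    exact this.congr_deriv (by ring)
  exact (hq.sub (hsum.const_mul c)).deriv

lemma pderiv2_off {N : ℕ} (c : ℝ) (i k : Fin N) (hik : k ≠ i) (x : Fin N → ℝ)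
    (hx : x i ≠ x k) :
    pderivCoord (pderivCoord (fun z => (z i) ^ 2 / 4
      - c * ∑ m ∈ univ.erase i, Real.log |z i - z m|) k) k x
      = c * ((x i - x k) ^ 2)⁻¹ := by
  rw [show pderivCoord (pderivCoord (fun z => (z i) ^ 2 / 4
      - c * ∑ m ∈ univ.erase i, Real.log |z i - z m|) k) k x
    = deriv (fun t => pderivCoord (fun z => (z i) ^ 2 / 4
      - c * ∑ m ∈ univ.erase i, Real.log |z i - z m|) k (Function.update x k t)) (x k) from rfl]
  have hev : (fun t => pderivCoord (fun z => (z i) ^ 2 / 4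
      - c * ∑ m ∈ univ.erase i, Real.log |z i - z m|) k (Function.update x k t))
      =ᶠ[nhds (x k)] fun t => c * (x i - t)⁻¹ := by
    filter_upwards [eventually_ne_nhds hx.symm] with t ht
    rw [pderiv_off c i k hik (Function.update x k t)
      (by rw [Function.update_of_ne hik.symm, Function.update_self]; exact ht.symm)]
    rw [Function.update_of_ne hik.symm, Function.update_self]
  rw [hev.deriv_eq]
  have h1 : HasDerivAt (fun t : ℝ => x i - t) (-1) (x k) := by
    simpa using (hasDerivAt_id (x k)).const_sub (x i)
  have h2 : HasDerivAt (fun t => c * (x i - t)⁻¹) _ (x k) := (h1.inv (sub_ne_zero.mpr hx)).const_mul c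
  rw [h2.deriv]
  ring

lemma pderiv2_diag {N : ℕ} (c : ℝ) (i : Fin N) (x : Fin N → ℝ)
    (hx : ∀ m ∈ univ.erase i, x i ≠ x m) :
    pderivCoord (pderivCoord (fun z => (z i) ^ 2 / 4
      - c * ∑ m ∈ univ.erase i, Real.log |z i - z m|) i) i x
      = 1 / 2 + c * ∑ m ∈ univ.erase i, ((x i - x m) ^ 2)⁻¹ := by
  rw [show pderivCoord (pderivCoord (fun z => (z i) ^ 2 / 4
      - c * ∑ m ∈ univ.erase i, Real.log |z i - z m|) i) i x
    = deriv (fun t => pderivCoord (fun z => (z i) ^ 2 / 4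
      - c * ∑ m ∈ univ.erase i, Real.log |z i - z m|) i (Function.update x i t)) (x i) from rfl]
  have hev : (fun t => pderivCoord (fun z => (z i) ^ 2 / 4
      - c * ∑ m ∈ univ.erase i, Real.log |z i - z m|) i (Function.update x i t))
      =ᶠ[nhds (x i)] fun t => t / 2 - c * ∑ m ∈ univ.erase i, (t - x m)⁻¹ := by
    have hall : ∀ᶠ t in nhds (x i), ∀ m ∈ univ.erase i, t ≠ x m := by
      rw [Filter.eventually_all_finset]
      exact fun m hm => eventually_ne_nhds (hx m hm)
    filter_upwards [hall] with t ht
    rw [pderiv_diag c i (Function.update x i t) (fun m hm => by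
      rw [Function.update_self, Function.update_of_ne (Finset.ne_of_mem_erase hm)]
      exact ht m hm)]
    rw [Function.update_self]
    congr 2
    refine Finset.sum_congr rfl fun m hm => ?_
    rw [Function.update_of_ne (Finset.ne_of_mem_erase hm)]
  rw [hev.deriv_eq]
  have hsum : HasDerivAt (fun t => ∑ m ∈ univ.erase i, (t - x m)⁻¹)
      (∑ m ∈ univ.erase i, (-1 / (x i - x m) ^ 2)) (x i) := by
    refine HasDerivAt.fun_sum fun m hm => ?_
    have h1 : HasDerivAt (fun t : ℝ => t - x m) 1 (x i) := by
      simpa using (hasDerivAt_id (x i)).sub_const (x m)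
    exact h1.inv (sub_ne_zero.mpr (hx m hm))
  have hlin : HasDerivAt (fun t : ℝ => t / 2) (1 / 2) (x i) := by
    simpa using (hasDerivAt_id (x i)).div_const 2
  rw [(show HasDerivAt (fun t => t / 2 - c * ∑ m ∈ univ.erase i, (t - x m)⁻¹) _ (x i) from
    hlin.sub (hsum.const_mul c)).deriv, Finset.mul_sum]
  rw [show ∑ m ∈ univ.erase i, c * (-1 / (x i - x m) ^ 2)
      = - ∑ m ∈ univ.erase i, c * ((x i - x m) ^ 2)⁻¹ by
    rw [← Finset.sum_neg_distrib]; exact Finset.sum_congr rfl fun m _ => by ring]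
  rw [Finset.mul_sum]
  ring

/-- Lemma `Nsubsolution`: with `C₂ = β(3β/2 − 2σ²)/4`, the explicit ergodic value pairs
`(v^{N,i}, λ^{N,i})` form a classical solution to the ergodic `N`-Nash system of the
closed loop Dyson game on the open Weyl chamber. -/
theorem dyson_N_nash_system (N : ℕ) (hN : 2 ≤ N) (σ β : ℝ) (hσ : 0 ≤ σ)
    (C₂ : ℝ) (hC₂ : C₂ = β * (3 / 2 * β - 2 * σ ^ 2) / 4)
    (W : Set (Fin N → ℝ)) (hWdef : W = {x | StrictMono x})
    (v : Fin N → (Fin N → ℝ) → ℝ)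
    (hv : ∀ i x, v i x = (x i) ^ 2 / 4
      - β / (2 * ((N : ℝ) - 1)) * ∑ k ∈ univ.erase i, Real.log |x i - x k|)
    (F : Fin N → (Fin N → ℝ) → ℝ)
    (hF : ∀ i x, F i x = (x i) ^ 2 / 8
      + C₂ / ((N : ℝ) - 1) ^ 2 * ∑ k ∈ univ.erase i, ((x i - x k) ^ 2)⁻¹)
    (lam : Fin N → ℝ)
    (hlam : ∀ i, lam i = β / 4 + σ ^ 2 / (4 * ((N : ℝ) - 1))) :
    (∀ i, ContDiffOn ℝ (⊤ : ℕ∞) (v i) W) ∧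
    ∀ x ∈ W, ∀ i : Fin N,
      -(σ ^ 2 / (2 * ((N : ℝ) - 1))) * (∑ k, pderivCoord (pderivCoord (v i) k) k x)
        + (∑ k ∈ univ.erase i, pderivCoord (v k) k x * pderivCoord (v i) k x)
        + (1 / 2) * (pderivCoord (v i) i x) ^ 2
      = F i x - lam i := by
  subst hWdef
  set c : ℝ := β / (2 * ((N : ℝ) - 1)) with hc
  have hv' : ∀ i, v i = fun z => (z i) ^ 2 / 4
      - c * ∑ m ∈ univ.erase i, Real.log |z i - z m| := fun i => funext (hv i)
  have h2N : (2 : ℝ) ≤ (N : ℝ) := by exact_mod_cast hN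
  have hn : ((N : ℝ) - 1) ≠ 0 := by linarith
  constructor
  · intro i x hx
    have hsm : StrictMono x := hx
    refine ContDiffAt.contDiffWithinAt ?_
    rw [hv' i]
    refine ContDiffAt.sub ?_ (ContDiffAt.mul contDiffAt_const ?_)
    · exact (((ContinuousLinearMap.proj i : (Fin N → ℝ) →L[ℝ] ℝ).contDiff.pow 2).div_const
        4).contDiffAt
    · refine ContDiffAt.sum fun m hm => ?_
      have hne : x i - x m ≠ 0 :=
        sub_ne_zero.mpr fun h => (Finset.ne_of_mem_erase hm) (hsm.injective h.symm)
      have : (fun z : Fin N → ℝ => Real.log |z i - z m|)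
          = fun z => Real.log (z i - z m) := by
        funext z; rw [Real.log_abs]
      rw [this]
      exact (Real.contDiffAt_log.mpr hne).comp x
        (((ContinuousLinearMap.proj i : (Fin N → ℝ) →L[ℝ] ℝ).contDiff.sub
          (ContinuousLinearMap.proj m).contDiff)).contDiffAt
  · intro x hx i
    have hsm : StrictMono x := hx
    have hne : ∀ m k : Fin N, m ≠ k → x m ≠ x k :=
      fun m k h e => h (hsm.injective e)
    set e : Finset (Fin N) := univ.erase i with he
    have hmem : ∀ k ∈ e, k ≠ i := fun k hk => Finset.ne_of_mem_erase hk
    -- second derivatives sum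
    have hsecond : ∑ k, pderivCoord (pderivCoord (v i) k) k x
        = (1 / 2 + c * ∑ m ∈ e, ((x i - x m) ^ 2)⁻¹)
          + c * ∑ m ∈ e, ((x i - x m) ^ 2)⁻¹ := by
      rw [← Finset.add_sum_erase univ _ (mem_univ i), ← he]
      congr 1
      · rw [hv' i]
        exact pderiv2_diag c i x (fun m hm => hne i m (Ne.symm (hmem m hm)))
      · rw [Finset.mul_sum]
        refine Finset.sum_congr rfl fun k hk => ?_
        rw [hv' i]
        exact pderiv2_off c i k (hmem k hk) x (hne i k (Ne.symm (hmem k hk)))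
    -- first derivative, diagonal
    have hdiag : pderivCoord (v i) i x = x i / 2 - c * ∑ m ∈ e, (x i - x m)⁻¹ := by
      rw [hv' i]
      exact pderiv_diag c i x (fun m hm => hne i m (Ne.symm (hmem m hm)))
    -- cross sum
    have hcross : ∑ k ∈ e, pderivCoord (v k) k x * pderivCoord (v i) k x
        = ∑ k ∈ e, (x k / 2 - c * ((x k - x i)⁻¹ + ∑ j ∈ e.erase k, (x k - x j)⁻¹))
            * (c * (x i - x k)⁻¹) := by
      refine Finset.sum_congr rfl fun k hk => ?_
      have hki : k ≠ i := hmem k hk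
      congr 1
      · rw [hv' k]
        rw [pderiv_diag c k x (fun m hm => hne k m (Ne.symm (Finset.ne_of_mem_erase hm)))]
        congr 2
        rw [← Finset.add_sum_erase (univ.erase k) (fun j => (x k - x j)⁻¹)
          (Finset.mem_erase.mpr ⟨Ne.symm hki, mem_univ i⟩), Finset.erase_right_comm, ← he]
      · rw [hv' i]
        exact pderiv_off c i k hki x (hne i k (Ne.symm hki))
    set S : ℝ := ∑ m ∈ e, (x i - x m)⁻¹ with hS
    set T : ℝ := ∑ m ∈ e, ((x i - x m) ^ 2)⁻¹ with hT
    set D : ℝ := ∑ k ∈ e, (∑ j ∈ e.erase k, (x k - x j)⁻¹) * (x i - x k)⁻¹ with hD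
    have hcard : (#e : ℝ) = (N : ℝ) - 1 := by
      rw [he, Finset.card_erase_of_mem (mem_univ i), Finset.card_univ, Fintype.card_fin,
        Nat.cast_sub (by omega : 1 ≤ N), Nat.cast_one]
    have hcross2 : ∑ k ∈ e, (x k / 2 - c * ((x k - x i)⁻¹ + ∑ j ∈ e.erase k, (x k - x j)⁻¹))
            * (c * (x i - x k)⁻¹)
        = (c * x i / 2) * S - (#e : ℝ) * (c / 2) + c ^ 2 * T - c ^ 2 * D := by
      have hterm : ∀ k ∈ e,
          (x k / 2 - c * ((x k - x i)⁻¹ + ∑ j ∈ e.erase k, (x k - x j)⁻¹))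
            * (c * (x i - x k)⁻¹)
          = (c * x i / 2) * (x i - x k)⁻¹ - c / 2 + c ^ 2 * ((x i - x k) ^ 2)⁻¹
            - c ^ 2 * ((∑ j ∈ e.erase k, (x k - x j)⁻¹) * (x i - x k)⁻¹) := by
        intro k hk
        have ha : x i - x k ≠ 0 := sub_ne_zero.mpr (hne i k (Ne.symm (hmem k hk)))
        exact cross_term c (x i) (x k) _ ha
      rw [Finset.sum_congr rfl hterm, Finset.sum_sub_distrib, Finset.sum_add_distrib,
        Finset.sum_sub_distrib, ← Finset.mul_sum, ← Finset.mul_sum, ← Finset.mul_sum,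
        Finset.sum_const, nsmul_eq_mul, ← hS, ← hT, ← hD]
    have hSS : S * S = T + 2 * D := by
      have h1 : S * S = ∑ k ∈ e, ∑ j ∈ e, (x i - x k)⁻¹ * (x i - x j)⁻¹ :=
        Finset.sum_mul_sum e e _ _
      have h2 : ∀ k ∈ e, ∑ j ∈ e, (x i - x k)⁻¹ * (x i - x j)⁻¹
          = ((x i - x k) ^ 2)⁻¹ + ∑ j ∈ e.erase k, (x i - x k)⁻¹ * (x i - x j)⁻¹ := by
        intro k hk
        rw [← Finset.add_sum_erase e _ hk]
        congr 1
        rw [sq, mul_inv]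
      have hD2 : D = ∑ k ∈ e, ∑ j ∈ e.erase k, (x k - x j)⁻¹ * (x i - x k)⁻¹ := by
        rw [hD]; exact Finset.sum_congr rfl fun k _ => Finset.sum_mul _ _ _
      have hD3 : D = ∑ k ∈ e, ∑ j ∈ e.erase k, (x j - x k)⁻¹ * (x i - x j)⁻¹ := by
        rw [hD2]; exact sum_erase_comm e _
      have h3 : ∑ k ∈ e, ∑ j ∈ e.erase k, (x i - x k)⁻¹ * (x i - x j)⁻¹
          = ∑ k ∈ e, ∑ j ∈ e.erase k, ((x k - x j)⁻¹ * (x i - x k)⁻¹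
              + (x j - x k)⁻¹ * (x i - x j)⁻¹) := by
        refine Finset.sum_congr rfl fun k hk => Finset.sum_congr rfl fun j hj => ?_
        have hkj : k ≠ j := fun h => (Finset.mem_erase.mp hj).1 h.symm
        exact (three_point (x i) (x k) (x j) (hne i k (Ne.symm (hmem k hk)))
          (hne i j (Ne.symm (hmem j (Finset.mem_of_mem_erase hj))))
          (hne k j hkj)).symm
      rw [h1, Finset.sum_congr rfl h2, Finset.sum_add_distrib, ← hT, h3]
      simp only [Finset.sum_add_distrib]
      rw [← hD2, ← hD3]
      ring
    rw [hsecond, hcross, hcross2, hdiag, hF, hlam, hcard, ← hT]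
    have hexp : (1 : ℝ) / 2 * (x i / 2 - c * S) ^ 2
        = x i ^ 2 / 8 - c * x i * S / 2 + c ^ 2 * (T + 2 * D) / 2 := by
      rw [show (1 : ℝ) / 2 * (x i / 2 - c * S) ^ 2
        = x i ^ 2 / 8 - c * x i * S / 2 + c ^ 2 * (S * S) / 2 by ring, hSS]
    rw [hexp, hC₂, hc]
    field_simp
    ring
end

section
/- Let N ≥ 2, σ ≥ 0, β ∈ ℝ. Define on the open Weyl chamber 𝒲^N: W_β(x) := ‖x‖²/4 − (β/(2(N−1))) ∑_{1≤k<ℓ≤N} log(x^ℓ − x^k), F^N(x) := ‖x‖²/8 + (β(β−2σ²)/8) · ∑_{i=1}^N (1/(N−1)²) ∑_{k≠i} 1/(x^i − x^k)², and λ^N := β/8 + σ²/(4(N−1)). Then W_β is infinitely differentiable on 𝒲^N and for every x ∈ 𝒲^N: −(σ²/(2N(N−1))) Δ W_β(x) + (1/(2N)) ‖∇W_β(x)‖² = (1/N) F^N(x) − λ^N, where ∇ is the gradient and Δ := ∑_{k=1}^N ∂_k² is the Laplacian on ℝᴺ. -/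
open Finset

variable {ι M : Type*} [DecidableEq ι] [AddCommMonoid M]

lemma pair_swap (s : Finset ι) (f : ι → ι → M) :
    ∑ k ∈ s, ∑ j ∈ s.erase k, f k j = ∑ k ∈ s, ∑ j ∈ s.erase k, f j k := by
  rw [Finset.sum_comm' (t' := s) (s' := fun j => s.erase j)]
  intro a b
  simp only [mem_erase]
  tauto

lemma tri_swap23 (s : Finset ι) (g : ι → ι → ι → M) :
    ∑ k ∈ s, ∑ j ∈ s.erase k, ∑ l ∈ (s.erase k).erase j, g k j l
      = ∑ k ∈ s, ∑ j ∈ s.erase k, ∑ l ∈ (s.erase k).erase j, g k l j :=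
  Finset.sum_congr rfl fun k _ => pair_swap (s.erase k) (fun j l => g k j l)

lemma tri_swap12 (s : Finset ι) (g : ι → ι → ι → M) :
    ∑ k ∈ s, ∑ j ∈ s.erase k, ∑ l ∈ (s.erase k).erase j, g k j l
      = ∑ k ∈ s, ∑ j ∈ s.erase k, ∑ l ∈ (s.erase k).erase j, g j k l := by
  rw [pair_swap s (fun k j => ∑ l ∈ (s.erase k).erase j, g k j l)]
  exact Finset.sum_congr rfl fun k _ => Finset.sum_congr rfl fun j _ => by
    rw [Finset.erase_right_comm]

lemma tri_cycle (s : Finset ι) (g : ι → ι → ι → M) :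
    ∑ k ∈ s, ∑ j ∈ s.erase k, ∑ l ∈ (s.erase k).erase j, g k j l
      = ∑ k ∈ s, ∑ j ∈ s.erase k, ∑ l ∈ (s.erase k).erase j, g j l k :=
  (tri_swap23 s g).trans (tri_swap12 s (fun k j l => g k l j))

lemma tri_zero (s : Finset ι) (g : ι → ι → ι → ℝ)
    (h : ∀ k ∈ s, ∀ j ∈ s.erase k, ∀ l ∈ (s.erase k).erase j,
      g k j l + g j l k + g l k j = 0) :
    ∑ k ∈ s, ∑ j ∈ s.erase k, ∑ l ∈ (s.erase k).erase j, g k j l = 0 := by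
  set S := ∑ k ∈ s, ∑ j ∈ s.erase k, ∑ l ∈ (s.erase k).erase j, g k j l with hS
  have h2 : S = ∑ k ∈ s, ∑ j ∈ s.erase k, ∑ l ∈ (s.erase k).erase j, g j l k := tri_cycle s g
  have h3 : S = ∑ k ∈ s, ∑ j ∈ s.erase k, ∑ l ∈ (s.erase k).erase j, g l k j := by
    rw [h2]; exact tri_cycle s (fun k j l => g j l k)
  have : S + S + S = 0 := by
    nth_rewrite 2 [h2]
    nth_rewrite 2 [h3]
    rw [hS, ← Finset.sum_add_distrib, ← Finset.sum_add_distrib]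
    refine Finset.sum_eq_zero fun k hk => ?_
    rw [← Finset.sum_add_distrib, ← Finset.sum_add_distrib]
    refine Finset.sum_eq_zero fun j hj => ?_
    rw [← Finset.sum_add_distrib, ← Finset.sum_add_distrib]
    exact Finset.sum_eq_zero fun l hl => h k hk j hj l hl
  linarith


lemma pairsum_split {N : ℕ} (k : Fin N) (f : Fin N → ℝ) :
    ∑ p ∈ univ.filter (fun p : Fin N × Fin N => p.1 < p.2),
        ((if p.1 = k then f p.2 else 0) + (if p.2 = k then f p.1 else 0))
      = ∑ j ∈ univ.erase k, f j := by
  rw [Finset.sum_add_distrib]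
  have h1 : ∑ p ∈ univ.filter (fun p : Fin N × Fin N => p.1 < p.2),
      (if p.1 = k then f p.2 else 0) = ∑ j ∈ univ.filter (fun j => k < j), f j := by
    rw [← Finset.sum_filter, Finset.filter_filter]
    refine Finset.sum_nbij' (fun p => p.2) (fun j => (k, j)) ?_ ?_ ?_ ?_ ?_
    · rintro ⟨a, b⟩ hp
      simp only [mem_filter, mem_univ, true_and] at hp ⊢
      exact hp.2 ▸ hp.1
    · intro j hj
      simp only [mem_filter, mem_univ, true_and] at hj ⊢
      exact ⟨hj, trivial⟩
    · rintro ⟨a, b⟩ hp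
      simp only [mem_filter, mem_univ, true_and] at hp
      obtain ⟨-, rfl⟩ := hp
      rfl
    · intro j hj; rfl
    · rintro ⟨a, b⟩ hp; rfl
  have h2 : ∑ p ∈ univ.filter (fun p : Fin N × Fin N => p.1 < p.2),
      (if p.2 = k then f p.1 else 0) = ∑ j ∈ univ.filter (fun j => j < k), f j := by
    rw [← Finset.sum_filter, Finset.filter_filter]
    refine Finset.sum_nbij' (fun p => p.1) (fun j => (j, k)) ?_ ?_ ?_ ?_ ?_
    · rintro ⟨a, b⟩ hp
      simp only [mem_filter, mem_univ, true_and] at hp ⊢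
      exact hp.2 ▸ hp.1
    · intro j hj
      simp only [mem_filter, mem_univ, true_and] at hj ⊢
      exact ⟨hj, trivial⟩
    · rintro ⟨a, b⟩ hp
      simp only [mem_filter, mem_univ, true_and] at hp
      obtain ⟨-, rfl⟩ := hp
      rfl
    · intro j hj; rfl
    · rintro ⟨a, b⟩ hp; rfl
  rw [h1, h2, ← Finset.filter_ne' univ k,
    ← Finset.sum_filter_add_sum_filter_not (univ.filter (fun j => j ≠ k)) (fun j => k < j) f,
    Finset.filter_filter, Finset.filter_filter]
  congr 1
  · apply Finset.sum_congr _ (fun _ _ => rfl)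
    ext j; simp only [mem_filter, mem_univ, true_and]; omega
  · apply Finset.sum_congr _ (fun _ _ => rfl)
    ext j; simp only [mem_filter, mem_univ, true_and]; omega

lemma hasDerivAt_W {N : ℕ} (c : ℝ) (x : Fin N → ℝ) (k : Fin N) (t₀ : ℝ)
    (h : ∀ j, j ≠ k → t₀ ≠ x j) :
    HasDerivAt (fun t => (∑ i, (Function.update x k t i) ^ 2) / 4
      - c * ∑ p ∈ univ.filter (fun p : Fin N × Fin N => p.1 < p.2),
          Real.log (Function.update x k t p.2 - Function.update x k t p.1))
      (t₀ / 2 - c * ∑ j ∈ univ.erase k, (t₀ - x j)⁻¹) t₀ := by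
  have hA : HasDerivAt (fun t => (∑ i, (Function.update x k t i) ^ 2) / 4) (t₀ / 2) t₀ := by
    have : HasDerivAt (fun t => ∑ i, (Function.update x k t i) ^ 2)
        (∑ i : Fin N, if i = k then 2 * t₀ else 0) t₀ := by
      refine HasDerivAt.fun_sum fun i _ => ?_
      by_cases hik : i = k
      · subst hik
        simp only [Function.update_self, if_pos rfl]
        simpa using hasDerivAt_pow 2 t₀
      · simp only [Function.update_of_ne hik, if_neg hik]
        exact hasDerivAt_const t₀ _
    rw [Finset.sum_ite_eq' univ k (fun _ => 2 * t₀)] at this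
    simp only [mem_univ, if_pos] at this
    have h4 := this.div_const 4
    refine h4.congr_deriv ?_
    ring
  have hB : HasDerivAt (fun t => ∑ p ∈ univ.filter (fun p : Fin N × Fin N => p.1 < p.2),
      Real.log (Function.update x k t p.2 - Function.update x k t p.1))
      (∑ j ∈ univ.erase k, (t₀ - x j)⁻¹) t₀ := by
    rw [← pairsum_split k (fun j => (t₀ - x j)⁻¹)]
    refine HasDerivAt.fun_sum fun p hp => ?_
    simp only [mem_filter, mem_univ, true_and] at hp
    by_cases h1 : p.1 = k
    · have h2 : p.2 ≠ k := fun hh => absurd (h1 ▸ hh ▸ hp) (lt_irrefl _)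
      simp only [if_pos h1, if_neg h2, add_zero]
      have hfun : (fun t => Real.log (Function.update x k t p.2 - Function.update x k t p.1))
          = fun t => Real.log (x p.2 - t) := by
        funext t
        rw [Function.update_of_ne h2, h1, Function.update_self]
      rw [hfun]
      have hne : x p.2 - t₀ ≠ 0 := sub_ne_zero.mpr fun hh => (h p.2 h2 hh.symm)
      have hd : HasDerivAt (fun t : ℝ => x p.2 - t) (0 - 1) t₀ :=
        (hasDerivAt_const t₀ (x p.2)).sub (hasDerivAt_id t₀)
      have := hd.log hne
      have hne' : t₀ - x p.2 ≠ 0 := sub_ne_zero.mpr (h p.2 h2)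
      refine this.congr_deriv ?_
      field_simp
      ring
    · by_cases h2 : p.2 = k
      · simp only [if_neg h1, if_pos h2, zero_add]
        have hfun : (fun t => Real.log (Function.update x k t p.2 - Function.update x k t p.1))
            = fun t => Real.log (t - x p.1) := by
          funext t
          rw [Function.update_of_ne h1, h2, Function.update_self]
        rw [hfun]
        have hne : t₀ - x p.1 ≠ 0 := sub_ne_zero.mpr (h p.1 h1)
        have hd : HasDerivAt (fun t : ℝ => t - x p.1) (1 - 0) t₀ :=
          (hasDerivAt_id t₀).sub (hasDerivAt_const t₀ (x p.1))
        have := hd.log hne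
        refine this.congr_deriv ?_
        field_simp
        ring
      · simp only [if_neg h1, if_neg h2, add_zero]
        have hfun : (fun t => Real.log (Function.update x k t p.2 - Function.update x k t p.1))
            = fun _ => Real.log (x p.2 - x p.1) := by
          funext t
          rw [Function.update_of_ne h1, Function.update_of_ne h2]
        rw [hfun]
        exact hasDerivAt_const t₀ _
  exact hA.sub (hB.const_mul c)

lemma hasDerivAt_phi {N : ℕ} (c : ℝ) (x : Fin N → ℝ) (k : Fin N) (t₀ : ℝ)
    (h : ∀ j, j ≠ k → t₀ ≠ x j) :
    HasDerivAt (fun t => t / 2 - c * ∑ j ∈ univ.erase k, (t - x j)⁻¹)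
      (1 / 2 + c * ∑ j ∈ univ.erase k, ((t₀ - x j) ^ 2)⁻¹) t₀ := by
  have hterm : ∀ j ∈ univ.erase k,
      HasDerivAt (fun t => (t - x j)⁻¹) (-(((t₀ - x j) ^ 2)⁻¹)) t₀ := by
    intro j hj
    have hjk : j ≠ k := (Finset.mem_erase.mp hj).1
    have hne : t₀ - x j ≠ 0 := sub_ne_zero.mpr (h j hjk)
    have hd : HasDerivAt (fun t : ℝ => t - x j) (1 - 0) t₀ :=
      (hasDerivAt_id t₀).sub (hasDerivAt_const t₀ (x j))
    have := hd.inv hne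
    refine this.congr_deriv ?_
    field_simp
    ring
  have hsum := HasDerivAt.fun_sum hterm
  have hid : HasDerivAt (fun t : ℝ => t / 2) ((1 : ℝ) / 2) t₀ := by
    simpa using (hasDerivAt_id t₀).div_const 2
  have := hid.sub (hsum.const_mul c)
  refine this.congr_deriv ?_
  simp only [Finset.sum_neg_distrib]
  ring

lemma pderiv_one {N : ℕ} (c : ℝ) (x : Fin N → ℝ) (k : Fin N)
    (h : ∀ j, j ≠ k → x k ≠ x j) :
    pderivCoord (fun y => (∑ i, (y i) ^ 2) / 4
      - c * ∑ p ∈ univ.filter (fun p : Fin N × Fin N => p.1 < p.2),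
          Real.log (y p.2 - y p.1)) k x
      = x k / 2 - c * ∑ j ∈ univ.erase k, (x k - x j)⁻¹ :=
  (hasDerivAt_W c x k (x k) h).deriv

lemma pderiv_two {N : ℕ} (c : ℝ) (x : Fin N → ℝ) (k : Fin N)
    (h : ∀ i j, i ≠ j → x i ≠ x j) :
    pderivCoord (pderivCoord (fun y => (∑ i, (y i) ^ 2) / 4
      - c * ∑ p ∈ univ.filter (fun p : Fin N × Fin N => p.1 < p.2),
          Real.log (y p.2 - y p.1)) k) k x
      = 1 / 2 + c * ∑ j ∈ univ.erase k, ((x k - x j) ^ 2)⁻¹ := by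
  have hU : IsOpen {t : ℝ | ∀ j, j ≠ k → t ≠ x j} := by
    have hset : {t : ℝ | ∀ j, j ≠ k → t ≠ x j}
        = (↑((univ.erase k).image x) : Set ℝ)ᶜ := by
      ext t
      simp only [Set.mem_setOf_eq, Set.mem_compl_iff, Finset.coe_image, Set.mem_image,
        Finset.mem_coe, Finset.mem_erase, mem_univ, and_true]
      constructor
      · rintro ht ⟨j, hjk, rfl⟩
        exact ht j hjk rfl
      · intro ht j hjk htj
        exact ht ⟨j, hjk, htj.symm⟩
    rw [hset]
    exact (Set.Finite.isClosed (Finset.finite_toSet _)).isOpen_compl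
  have hmem : x k ∈ {t : ℝ | ∀ j, j ≠ k → t ≠ x j} := fun j hj => h k j (Ne.symm hj)
  have heq : (fun t => pderivCoord (fun y => (∑ i, (y i) ^ 2) / 4
      - c * ∑ p ∈ univ.filter (fun p : Fin N × Fin N => p.1 < p.2),
          Real.log (y p.2 - y p.1)) k (Function.update x k t))
      =ᶠ[nhds (x k)]
      (fun t => t / 2 - c * ∑ j ∈ univ.erase k, (t - x j)⁻¹) := by
    refine Filter.eventuallyEq_of_mem (hU.mem_nhds hmem) fun t ht => ?_
    have ht' : ∀ j, j ≠ k → t ≠ x j := ht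
    have key : pderivCoord (fun y => (∑ i, (y i) ^ 2) / 4
        - c * ∑ p ∈ univ.filter (fun p : Fin N × Fin N => p.1 < p.2),
            Real.log (y p.2 - y p.1)) k (Function.update x k t)
        = deriv (fun s => (∑ i, (Function.update x k s i) ^ 2) / 4
          - c * ∑ p ∈ univ.filter (fun p : Fin N × Fin N => p.1 < p.2),
              Real.log (Function.update x k s p.2 - Function.update x k s p.1)) t := by
      unfold pderivCoord
      rw [Function.update_self]
      congr 1
      funext s
      rw [Function.update_idem]
    rw [key, (hasDerivAt_W c x k t ht').deriv]
  exact heq.deriv_eq.trans (hasDerivAt_phi c x k (x k) (fun j hj => h k j (Ne.symm hj))).deriv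

lemma sumI1 {N : ℕ} (hN : 1 ≤ N) (x : Fin N → ℝ) (h : ∀ i j, i ≠ j → x i ≠ x j) :
    ∑ k : Fin N, x k * ∑ j ∈ univ.erase k, (x k - x j)⁻¹
      = (N : ℝ) * ((N : ℝ) - 1) / 2 := by
  simp_rw [Finset.mul_sum]
  set S := ∑ k : Fin N, ∑ j ∈ univ.erase k, x k * (x k - x j)⁻¹ with hSdef
  have hswap : S = ∑ k : Fin N, ∑ j ∈ univ.erase k, x j * (x j - x k)⁻¹ :=
    pair_swap univ (fun k j => x k * (x k - x j)⁻¹)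
  have hdouble : S + S = (N : ℝ) * ((N : ℝ) - 1) := by
    nth_rewrite 2 [hswap]
    rw [hSdef, ← Finset.sum_add_distrib]
    have : ∀ k : Fin N, (∑ j ∈ univ.erase k, x k * (x k - x j)⁻¹)
        + ∑ j ∈ univ.erase k, x j * (x j - x k)⁻¹
        = ∑ j ∈ univ.erase k, (1 : ℝ) := by
      intro k
      rw [← Finset.sum_add_distrib]
      refine Finset.sum_congr rfl fun j hj => ?_
      have hjk : j ≠ k := (Finset.mem_erase.mp hj).1
      have d1 : x k - x j ≠ 0 := sub_ne_zero.mpr (h k j (Ne.symm hjk))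
      have d2 : x j - x k ≠ 0 := sub_ne_zero.mpr (h j k hjk)
      field_simp
      ring
    rw [Finset.sum_congr rfl fun k _ => this k]
    simp only [Finset.sum_const, Finset.card_erase_of_mem (mem_univ _), Finset.card_univ,
      Fintype.card_fin, nsmul_eq_mul, mul_one]
    rw [Nat.cast_sub hN]
    push_cast
    ring
  linarith

lemma sumI2 {N : ℕ} (x : Fin N → ℝ) (h : ∀ i j, i ≠ j → x i ≠ x j) :
    ∑ k : Fin N, (∑ j ∈ univ.erase k, (x k - x j)⁻¹) ^ 2
      = ∑ k : Fin N, ∑ j ∈ univ.erase k, ((x k - x j) ^ 2)⁻¹ := by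
  have expand : ∀ k : Fin N, (∑ j ∈ univ.erase k, (x k - x j)⁻¹) ^ 2
      = (∑ j ∈ univ.erase k, ((x k - x j) ^ 2)⁻¹)
        + ∑ j ∈ univ.erase k, ∑ l ∈ (univ.erase k).erase j,
            (x k - x j)⁻¹ * (x k - x l)⁻¹ := by
    intro k
    rw [sq, Finset.sum_mul_sum, ← Finset.sum_add_distrib]
    refine Finset.sum_congr rfl fun j hj => ?_
    rw [← Finset.add_sum_erase _ (fun l => (x k - x j)⁻¹ * (x k - x l)⁻¹) hj]
    congr 1
    rw [← mul_inv, ← sq]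
  have hzero : ∑ k ∈ (univ : Finset (Fin N)), ∑ j ∈ univ.erase k,
      ∑ l ∈ (univ.erase k).erase j, (x k - x j)⁻¹ * (x k - x l)⁻¹ = 0 := by
    refine tri_zero univ (fun k j l => (x k - x j)⁻¹ * (x k - x l)⁻¹) ?_
    intro k _ j hj l hl
    have hjk : j ≠ k := (Finset.mem_erase.mp hj).1
    have hlj : l ≠ j := (Finset.mem_erase.mp hl).1
    have hlk : l ≠ k := (Finset.mem_erase.mp (Finset.mem_erase.mp hl).2).1
    have d1 : x k - x j ≠ 0 := sub_ne_zero.mpr (h k j (Ne.symm hjk))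
    have d2 : x k - x l ≠ 0 := sub_ne_zero.mpr (h k l (Ne.symm hlk))
    have d3 : x j - x l ≠ 0 := sub_ne_zero.mpr (h j l (Ne.symm hlj))
    have d4 : x j - x k ≠ 0 := sub_ne_zero.mpr (h j k hjk)
    have d5 : x l - x k ≠ 0 := sub_ne_zero.mpr (h l k hlk)
    have d6 : x l - x j ≠ 0 := sub_ne_zero.mpr (h l j hlj)
    field_simp
    ring
  calc ∑ k : Fin N, (∑ j ∈ univ.erase k, (x k - x j)⁻¹) ^ 2
      = ∑ k : Fin N, ((∑ j ∈ univ.erase k, ((x k - x j) ^ 2)⁻¹)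
        + ∑ j ∈ univ.erase k, ∑ l ∈ (univ.erase k).erase j,
            (x k - x j)⁻¹ * (x k - x l)⁻¹) := Finset.sum_congr rfl fun k _ => expand k
    _ = (∑ k : Fin N, ∑ j ∈ univ.erase k, ((x k - x j) ^ 2)⁻¹)
        + ∑ k : Fin N, ∑ j ∈ univ.erase k, ∑ l ∈ (univ.erase k).erase j,
            (x k - x j)⁻¹ * (x k - x l)⁻¹ := Finset.sum_add_distrib
    _ = ∑ k : Fin N, ∑ j ∈ univ.erase k, ((x k - x j) ^ 2)⁻¹ := by rw [hzero, add_zero]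

/-- Lemma `openloopehjbtheorem`: the explicit pair `(W_β, λ^N)` solves the ergodic HJB
equation of the global problem associated to the open loop Dyson game on the Weyl chamber,
where here `F^N` has singular coefficient `β(β − 2σ²)/8`. -/
theorem dyson_open_loop_hjb (N : ℕ) (hN : 2 ≤ N) (σ β : ℝ) (hσ : 0 ≤ σ)
    (Wset : Set (Fin N → ℝ)) (hWset : Wset = {x | StrictMono x})
    (Wβ : (Fin N → ℝ) → ℝ)
    (hWβ : ∀ x, Wβ x = (∑ i, (x i) ^ 2) / 4
      - β / (2 * ((N : ℝ) - 1)) *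
          ∑ p ∈ univ.filter (fun p : Fin N × Fin N => p.1 < p.2), Real.log (x p.2 - x p.1))
    (F : (Fin N → ℝ) → ℝ)
    (hF : ∀ x, F x = (∑ i, (x i) ^ 2) / 8
      + β * (β - 2 * σ ^ 2) / 8 *
          ∑ i, (((N : ℝ) - 1) ^ 2)⁻¹ * ∑ k ∈ univ.erase i, ((x i - x k) ^ 2)⁻¹)
    (lam : ℝ) (hlam : lam = β / 8 + σ ^ 2 / (4 * ((N : ℝ) - 1))) :
    ContDiffOn ℝ (⊤ : ℕ∞) Wβ Wset ∧
    ∀ x ∈ Wset,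
      -(σ ^ 2 / (2 * (N : ℝ) * ((N : ℝ) - 1))) * (∑ k, pderivCoord (pderivCoord Wβ k) k x)
        + (1 / (2 * (N : ℝ))) * (∑ k, (pderivCoord Wβ k x) ^ 2)
      = (1 / (N : ℝ)) * F x - lam := by
  have hN1 : ((N : ℝ) - 1) ≠ 0 := by
    have : (2 : ℝ) ≤ (N : ℝ) := by exact_mod_cast hN
    linarith
  have hN0 : (N : ℝ) ≠ 0 := by
    have : (2 : ℝ) ≤ (N : ℝ) := by exact_mod_cast hN
    linarith
  set c : ℝ := β / (2 * ((N : ℝ) - 1)) with hc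
  have hW : Wβ = fun y => (∑ i, (y i) ^ 2) / 4
      - c * ∑ p ∈ univ.filter (fun p : Fin N × Fin N => p.1 < p.2),
          Real.log (y p.2 - y p.1) := funext hWβ
  subst hWset
  constructor
  · rw [hW]
    intro x hx
    apply ContDiffAt.contDiffWithinAt
    apply ContDiffAt.sub
    · exact ((ContDiff.sum fun i _ =>
        (contDiff_apply ℝ ℝ i).pow 2).div_const 4).contDiffAt
    · refine ContDiffAt.mul contDiffAt_const ?_
      refine ContDiffAt.sum fun p hp => ?_
      have hp' : p.1 < p.2 := (Finset.mem_filter.mp hp).2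
      have hne : x p.2 - x p.1 ≠ 0 := sub_ne_zero.mpr (hx hp').ne'
      exact (((contDiff_apply ℝ ℝ p.2).sub (contDiff_apply ℝ ℝ p.1)).contDiffAt).log hne
  · intro x hx
    have hinj : ∀ i j, i ≠ j → x i ≠ x j := fun i j hij e => hij (hx.injective e)
    have hd1 : ∀ k, pderivCoord Wβ k x
        = x k / 2 - c * ∑ j ∈ univ.erase k, (x k - x j)⁻¹ := fun k => by
      rw [hW]; exact pderiv_one c x k (fun j hj => hinj k j (Ne.symm hj))
    have hd2 : ∀ k, pderivCoord (pderivCoord Wβ k) k x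
        = 1 / 2 + c * ∑ j ∈ univ.erase k, ((x k - x j) ^ 2)⁻¹ := fun k => by
      rw [hW]; exact pderiv_two c x k hinj
    simp only [hd2, hd1]
    have e1 : ∑ k : Fin N, (1 / 2 + c * ∑ j ∈ univ.erase k, ((x k - x j) ^ 2)⁻¹)
        = (N : ℝ) / 2 + c * ∑ k : Fin N, ∑ j ∈ univ.erase k, ((x k - x j) ^ 2)⁻¹ := by
      rw [Finset.sum_add_distrib, ← Finset.mul_sum]
      congr 1
      rw [Finset.sum_const, Finset.card_univ, Fintype.card_fin, nsmul_eq_mul]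
      ring
    have e2 : ∑ k : Fin N, (x k / 2 - c * ∑ j ∈ univ.erase k, (x k - x j)⁻¹) ^ 2
        = (∑ i, (x i) ^ 2) / 4 - c * ((N : ℝ) * ((N : ℝ) - 1) / 2)
          + c ^ 2 * ∑ k : Fin N, ∑ j ∈ univ.erase k, ((x k - x j) ^ 2)⁻¹ := by
      have ex : ∀ k : Fin N, (x k / 2 - c * ∑ j ∈ univ.erase k, (x k - x j)⁻¹) ^ 2
          = (x k) ^ 2 / 4 - c * (x k * ∑ j ∈ univ.erase k, (x k - x j)⁻¹)
            + c ^ 2 * (∑ j ∈ univ.erase k, (x k - x j)⁻¹) ^ 2 := fun k => by ring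
      rw [Finset.sum_congr rfl fun k _ => ex k, Finset.sum_add_distrib,
        Finset.sum_sub_distrib, ← Finset.mul_sum, ← Finset.mul_sum, ← Finset.sum_div,
        sumI1 (by omega) x hinj, sumI2 x hinj]
    rw [e1, e2, hF x, hlam, ← Finset.mul_sum]
    set A := ∑ i, (x i) ^ 2
    set B := ∑ k : Fin N, ∑ j ∈ univ.erase k, ((x k - x j) ^ 2)⁻¹
    rw [hc]
    field_simp
    ring
end

section
/- Let N ≥ 2, σ ≥ 0, β ∈ ℝ. For z = (z¹,…,zᴺ) ∈ (ℝ²)ᴺ with pairwise distinct components define: W_β(z) := ‖z‖²/4 − (β/(2(N−1))) ∑_{1≤k<ℓ≤N} log|z^ℓ − z^k|, F^N(z) := ‖z‖²/8 + (β²/8) ∑_{i=1}^N | (1/(N−1)) ∑_{k≠i} (z^i − z^k)/|z^i − z^k|² |², and λ^N := β/8 + σ²/(2(N−1)). Then W_β is infinitely differentiable on 𝒟^N := {z ∈ (ℝ²)ᴺ : z^i ≠ z^j for i ≠ j}, its Laplacian satisfies Δ_z W_β(z) = N for all z ∈ 𝒟^N, and for every z ∈ 𝒟^N: −(σ²/(2N(N−1)))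 Δ_z W_β(z) + (1/(2N)) ‖∇_z W_β(z)‖² = (1/N) F^N(z) − λ^N, where ∇_z is the full gradient and Δ_z the Laplacian in all 2N real coordinates. -/
open Finset
open scoped RealInnerProductSpace

/-- Partial derivative of `f : (ℝ²)ᴺ → ℝ` with respect to the `j`-th real coordinate of
the `k`-th planar component. -/
noncomputable def pderivCoord2 {N : ℕ}
    (f : (Fin N → EuclideanSpace ℝ (Fin 2)) → ℝ) (k : Fin N) (j : Fin 2)
    (z : Fin N → EuclideanSpace ℝ (Fin 2)) : ℝ :=
  deriv (fun t : ℝ => f (Function.update z k (z k + t • EuclideanSpace.single j (1 : ℝ)))) 0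

local notation "E2" => EuclideanSpace ℝ (Fin 2)

noncomputable def ee (j : Fin 2) : E2 := EuclideanSpace.single j (1:ℝ)

lemma normsq_eq_sum (x : E2) : ‖x‖^2 = ∑ j, (x j)^2 := by
  rw [EuclideanSpace.norm_eq, Real.sq_sqrt (by positivity)]
  simp [sq_abs]

lemma inner_eq_sum (x y : E2) : ⟪x, y⟫ = ∑ j, x j * y j := by
  simp [PiLp.inner_apply, RCLike.inner_apply, mul_comm]

lemma inner_e (x : E2) (j : Fin 2) : ⟪x, ee j⟫ = x j := by
  simp [ee, EuclideanSpace.inner_single_right]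

lemma path_normsq (a : E2) (j : Fin 2) (t : ℝ) :
    ‖a + t • ee j‖^2 = ‖a‖^2 + 2*(a j)*t + t^2 := by
  rw [norm_add_sq_real, real_inner_smul_right, inner_e]
  rw [norm_smul]
  simp [ee]
  ring

lemma path_coord (a : E2) (j : Fin 2) (t : ℝ) : (a + t • ee j) j = a j + t := by
  simp [ee, EuclideanSpace.single_apply]

lemma path_log (a : E2) (j : Fin 2) (t : ℝ) :
    Real.log ‖a + t • ee j‖ = Real.log (‖a‖^2 + 2*(a j)*t + t^2) / 2 := by
  rw [← path_normsq a j t, Real.log_pow]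
  push_cast; ring

lemma hasDerivAt_q (a : E2) (j : Fin 2) (t : ℝ) :
    HasDerivAt (fun s : ℝ => ‖a‖^2 + 2*(a j)*s + s^2) (2*(a j) + 2*t) t := by
  have h := (((hasDerivAt_id t).const_mul (2*(a j))).add (hasDerivAt_pow 2 t)).const_add (‖a‖^2)
  simpa [mul_comm, ← add_assoc] using h

lemma q0_ne (a : E2) (ha : a ≠ 0) (j : Fin 2) : ‖a‖^2 + 2*(a j)*0 + 0^2 ≠ 0 := by
  have h0 : ‖a‖ ≠ 0 := norm_ne_zero_iff.2 ha
  have : (0:ℝ) < ‖a‖^2 := by positivity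
  simpa using this.ne'

lemma hasDerivAt_logpath (a : E2) (j : Fin 2) (ha : a ≠ 0) :
    HasDerivAt (fun t : ℝ => Real.log ‖a + t • ee j‖) (a j / ‖a‖^2) 0 := by
  have hfun : (fun t : ℝ => Real.log ‖a + t • ee j‖)
      = fun t => Real.log (‖a‖^2 + 2*(a j)*t + t^2) / 2 := funext (path_log a j)
  rw [hfun]
  have hq : HasDerivAt (fun s : ℝ => ‖a‖^2 + 2*(a j)*s + s^2) (2*(a j)) 0 := by
    simpa using hasDerivAt_q a j 0
  have h := ((Real.hasDerivAt_log (q0_ne a ha j)).comp 0 hq).div_const 2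
  refine h.congr_deriv ?_
  have h2 : ‖a‖ ≠ 0 := norm_ne_zero_iff.2 ha
  field_simp
  ring

lemma hasDerivAt_gradterm (a : E2) (j : Fin 2) (ha : a ≠ 0) :
    HasDerivAt (fun s : ℝ => ((a + s • ee j) j) / ‖a + s • ee j‖^2)
      ((‖a‖^2 - 2*(a j)^2) / (‖a‖^2)^2) 0 := by
  have hfun : (fun s : ℝ => ((a + s • ee j) j) / ‖a + s • ee j‖^2)
      = fun s => (a j + s) / (‖a‖^2 + 2*(a j)*s + s^2) :=
    funext fun s => by rw [path_coord, path_normsq]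
  rw [hfun]
  have hnum : HasDerivAt (fun s : ℝ => a j + s) 1 0 := (hasDerivAt_id 0).const_add (a j)
  have h := hnum.div (hasDerivAt_q a j 0) (q0_ne a ha j)
  refine h.congr_deriv ?_
  simp
  ring

lemma sum_comp_update {α M : Type*} [AddCommMonoid M] {N : ℕ} [DecidableEq (Fin N)]
    (f : Fin N → α) (k : Fin N) (v : α) (g : α → M) :
    ∑ i, g (Function.update f k v i) = g v + ∑ i ∈ univ.erase k, g (f i) := by
  have h : ∀ i, g (Function.update f k v i) = Function.update (g ∘ f) k (g v) i := fun i => by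
    rw [← Function.comp_update]; rfl
  simp_rw [h]
  rw [Finset.sum_update_of_mem (mem_univ k)]
  rw [← Finset.sdiff_singleton_eq_erase]
  rfl

lemma sum_offdiag {N : ℕ} (g : Fin N → Fin N → ℝ) :
    ∑ p ∈ univ.filter (fun p : Fin N × Fin N => p.1 ≠ p.2), g p.1 p.2
      = ∑ a, ∑ b ∈ univ.erase a, g a b := by
  rw [Finset.sum_filter, Fintype.sum_prod_type]
  refine Finset.sum_congr rfl fun a _ => ?_
  rw [← Finset.filter_ne' univ a, Finset.sum_filter]
  exact Finset.sum_congr rfl fun b _ => by by_cases h : a = b <;> simp [h, eq_comm]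

lemma sum_offdiag_swap {N : ℕ} (g : Fin N → Fin N → ℝ) :
    ∑ p ∈ univ.filter (fun p : Fin N × Fin N => p.1 ≠ p.2), g p.1 p.2
      = ∑ p ∈ univ.filter (fun p : Fin N × Fin N => p.1 ≠ p.2), g p.2 p.1 := by
  refine Finset.sum_nbij' (fun p => Prod.swap p) (fun p => Prod.swap p) ?_ ?_ ?_ ?_ ?_ <;>
    simp [eq_comm, Ne, and_comm]

lemma pair_half {N : ℕ} (g : Fin N → Fin N → ℝ) (hg : ∀ a b, g a b = g b a) :
    ∑ p ∈ univ.filter (fun p : Fin N × Fin N => p.1 < p.2), g p.1 p.2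
      = (∑ a, ∑ b ∈ univ.erase a, g a b) / 2 := by
  rw [← sum_offdiag]
  have hsplit := Finset.sum_filter_add_sum_filter_not
    (univ.filter (fun p : Fin N × Fin N => p.1 ≠ p.2)) (fun p => p.1 < p.2)
    (fun p => g p.1 p.2)
  rw [Finset.filter_filter, Finset.filter_filter] at hsplit
  have h1 : univ.filter (fun p : Fin N × Fin N => p.1 ≠ p.2 ∧ p.1 < p.2)
      = univ.filter (fun p : Fin N × Fin N => p.1 < p.2) := by
    apply Finset.filter_congr; intro p _
    constructor
    · exact fun h => h.2
    · exact fun h => ⟨ne_of_lt h, h⟩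
  have h2 : univ.filter (fun p : Fin N × Fin N => p.1 ≠ p.2 ∧ ¬ p.1 < p.2)
      = univ.filter (fun p : Fin N × Fin N => p.2 < p.1) := by
    apply Finset.filter_congr; intro p _
    constructor
    · rintro ⟨hne, hnlt⟩; exact lt_of_le_of_ne (not_lt.1 hnlt) (Ne.symm hne)
    · exact fun h => ⟨(ne_of_lt h).symm, not_lt.2 h.le⟩
  rw [h1, h2] at hsplit
  have hswap : ∑ p ∈ univ.filter (fun p : Fin N × Fin N => p.2 < p.1), g p.1 p.2
      = ∑ p ∈ univ.filter (fun p : Fin N × Fin N => p.1 < p.2), g p.1 p.2 := by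
    refine Finset.sum_nbij' (fun p => Prod.swap p) (fun p => Prod.swap p) ?_ ?_ ?_ ?_ ?_
    · intro p hp; simp only [Finset.mem_filter, Finset.mem_univ, true_and] at hp ⊢; exact hp
    · intro p hp; simp only [Finset.mem_filter, Finset.mem_univ, true_and] at hp ⊢; exact hp
    · intro p _; rfl
    · intro p _; rfl
    · intro p _; exact hg p.1 p.2
  rw [← hsplit, hswap]
  ring

lemma offdiag_pairing {N : ℕ} (hN : 1 ≤ N) (g : Fin N → Fin N → ℝ)
    (h : ∀ a b, a ≠ b → g a b + g b a = 1) :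
    ∑ a, ∑ b ∈ univ.erase a, g a b = (N:ℝ)*((N:ℝ)-1)/2 := by
  have h2 : (∑ a, ∑ b ∈ univ.erase a, g a b) * 2 = (N:ℝ)*((N:ℝ)-1) := by
    have e1 := sum_offdiag g
    have e2 := sum_offdiag (fun a b => g b a)
    have e3 := sum_offdiag_swap g
    have : (∑ a, ∑ b ∈ univ.erase a, g a b) + (∑ a, ∑ b ∈ univ.erase a, g b a)
        = ∑ a : Fin N, ∑ _b ∈ univ.erase a, (1:ℝ) := by
      rw [← Finset.sum_add_distrib]
      refine Finset.sum_congr rfl fun a _ => ?_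
      rw [← Finset.sum_add_distrib]
      refine Finset.sum_congr rfl fun b hb => h a b (Ne.symm (Finset.mem_erase.1 hb).1)
    rw [← e1, ← e2, ← e3, ← two_mul] at this
    rw [mul_comm, ← e1, this]
    rw [Finset.sum_congr rfl (fun (a : Fin N) _ => Finset.sum_const (1:ℝ))]
    simp only [Finset.card_erase_of_mem, Finset.mem_univ, Finset.card_univ, Fintype.card_fin,
      nsmul_eq_mul, mul_one, Finset.sum_const]
    rw [Nat.cast_sub hN]
    push_cast
    ring
  linarith

lemma L_update {N : ℕ} (z : Fin N → E2) (k : Fin N) (v : E2) :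
    ∑ a, ∑ b ∈ univ.erase a, Real.log ‖Function.update z k v b - Function.update z k v a‖
      = 2 * (∑ ℓ ∈ univ.erase k, Real.log ‖v - z ℓ‖)
        + ∑ a ∈ univ.erase k, ∑ b ∈ (univ.erase a).erase k, Real.log ‖z b - z a‖ := by
  rw [← Finset.add_sum_erase univ _ (mem_univ k)]
  have hk : ∑ b ∈ univ.erase k,
      Real.log ‖Function.update z k v b - Function.update z k v k‖
      = ∑ ℓ ∈ univ.erase k, Real.log ‖v - z ℓ‖ := by
    refine Finset.sum_congr rfl fun b hb => ?_
    rw [Function.update_self, Function.update_of_ne (Finset.mem_erase.1 hb).1, norm_sub_rev]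
  have hrest : ∀ a ∈ univ.erase k,
      ∑ b ∈ univ.erase a, Real.log ‖Function.update z k v b - Function.update z k v a‖
      = Real.log ‖v - z a‖ + ∑ b ∈ (univ.erase a).erase k, Real.log ‖z b - z a‖ := by
    intro a ha
    have hak : a ≠ k := (Finset.mem_erase.1 ha).1
    rw [← Finset.add_sum_erase (univ.erase a) _ (Finset.mem_erase.2 ⟨Ne.symm hak, mem_univ k⟩)]
    congr 1
    · rw [Function.update_self, Function.update_of_ne hak]
    · refine Finset.sum_congr rfl fun b hb => ?_
      rw [Function.update_of_ne (Finset.mem_erase.1 hb).1, Function.update_of_ne hak]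
  rw [hk, Finset.sum_congr rfl hrest, Finset.sum_add_distrib]
  ring


lemma grad_formula {N : ℕ} (β : ℝ) (Wβ : (Fin N → E2) → ℝ)
    (hWβ : ∀ z : Fin N → E2, Wβ z = (∑ i, ‖z i‖ ^ 2) / 4
      - β / (2 * ((N : ℝ) - 1)) *
          ∑ p ∈ univ.filter (fun p : Fin N × Fin N => p.1 < p.2), Real.log ‖z p.2 - z p.1‖)
    (k : Fin N) (j : Fin 2) (z : Fin N → E2)
    (hz : ∀ ℓ ∈ univ.erase k, z k ≠ z ℓ) :
    pderivCoord2 Wβ k j z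
      = z k j / 2 - β / (2 * ((N:ℝ) - 1)) *
          ∑ ℓ ∈ univ.erase k, ((z k - z ℓ) j) / ‖z k - z ℓ‖ ^ 2 := by
  set c := β / (2 * ((N:ℝ)-1)) with hc
  have hW' : ∀ w : Fin N → E2, Wβ w = (∑ i, ‖w i‖ ^ 2) / 4
      - c * ((∑ a, ∑ b ∈ univ.erase a, Real.log ‖w b - w a‖) / 2) := by
    intro w
    rw [hWβ w, pair_half (fun a b => Real.log ‖w b - w a‖)
      (fun a b => show Real.log ‖w b - w a‖ = Real.log ‖w a - w b‖ by rw [norm_sub_rev])]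
  have hstart : pderivCoord2 Wβ k j z
      = deriv (fun t : ℝ => Wβ (Function.update z k (z k + t • ee j))) 0 := rfl
  have hfun : (fun t : ℝ => Wβ (Function.update z k (z k + t • ee j)))
      = fun t => ((‖z k + t • ee j‖^2 + ∑ i ∈ univ.erase k, ‖z i‖^2)/4
        - c * (∑ ℓ ∈ univ.erase k, Real.log ‖(z k - z ℓ) + t • ee j‖))
        - c * ((∑ a ∈ univ.erase k, ∑ b ∈ (univ.erase a).erase k, Real.log ‖z b - z a‖)/2) := by
    funext t
    rw [hW', sum_comp_update z k (z k + t • ee j) (fun x : E2 => ‖x‖^2), L_update]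
    have hcg : ∀ ℓ ∈ univ.erase k,
        Real.log ‖(z k + t • ee j) - z ℓ‖ = Real.log ‖(z k - z ℓ) + t • ee j‖ := fun ℓ _ => by
      rw [add_sub_right_comm]
    rw [Finset.sum_congr rfl hcg]
    ring
  rw [hstart, hfun]
  have h1 : HasDerivAt (fun t : ℝ => (‖z k + t • ee j‖^2 + ∑ i ∈ univ.erase k, ‖z i‖^2)/4)
      (z k j / 2) 0 := by
    have hfq : (fun t : ℝ => (‖z k + t • ee j‖^2 + ∑ i ∈ univ.erase k, ‖z i‖^2)/4)
        = fun t => (‖z k‖^2 + 2*(z k j)*t + t^2 + ∑ i ∈ univ.erase k, ‖z i‖^2)/4 :=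
      funext fun t => by rw [path_normsq]
    rw [hfq]
    have h := ((hasDerivAt_q (z k) j 0).add_const (∑ i ∈ univ.erase k, ‖z i‖^2)).div_const 4
    refine h.congr_deriv ?_
    ring
  have h2 : HasDerivAt (fun t : ℝ => ∑ ℓ ∈ univ.erase k, Real.log ‖(z k - z ℓ) + t • ee j‖)
      (∑ ℓ ∈ univ.erase k, ((z k - z ℓ) j) / ‖z k - z ℓ‖^2) 0 :=
    HasDerivAt.fun_sum fun ℓ hℓ => hasDerivAt_logpath _ j (sub_ne_zero.2 (hz ℓ hℓ))
  exact ((h1.sub (h2.const_mul c)).sub_const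
    (c * ((∑ a ∈ univ.erase k, ∑ b ∈ (univ.erase a).erase k, Real.log ‖z b - z a‖)/2))).deriv

lemma lap_formula {N : ℕ} (β : ℝ) (Wβ : (Fin N → E2) → ℝ)
    (hWβ : ∀ z : Fin N → E2, Wβ z = (∑ i, ‖z i‖ ^ 2) / 4
      - β / (2 * ((N : ℝ) - 1)) *
          ∑ p ∈ univ.filter (fun p : Fin N × Fin N => p.1 < p.2), Real.log ‖z p.2 - z p.1‖)
    (k : Fin N) (j : Fin 2) (z : Fin N → E2)
    (hz : ∀ ℓ ∈ univ.erase k, z k ≠ z ℓ) :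
    pderivCoord2 (pderivCoord2 Wβ k j) k j z
      = 1/2 - β / (2 * ((N:ℝ) - 1)) *
          ∑ ℓ ∈ univ.erase k, (‖z k - z ℓ‖^2 - 2*((z k - z ℓ) j)^2) / (‖z k - z ℓ‖^2)^2 := by
  set c := β / (2 * ((N:ℝ)-1)) with hc
  have hstart : pderivCoord2 (pderivCoord2 Wβ k j) k j z
      = deriv (fun s : ℝ => pderivCoord2 Wβ k j (Function.update z k (z k + s • ee j))) 0 := rfl
  rw [hstart]
  have hev : (fun s : ℝ => pderivCoord2 Wβ k j (Function.update z k (z k + s • ee j)))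
      =ᶠ[nhds (0:ℝ)] fun s => (z k j + s)/2
        - c * ∑ ℓ ∈ univ.erase k, (((z k - z ℓ) + s • ee j) j) / ‖(z k - z ℓ) + s • ee j‖^2 := by
    have hall : ∀ᶠ s : ℝ in nhds 0, ∀ ℓ ∈ univ.erase k, z k + s • ee j ≠ z ℓ := by
      rw [Filter.eventually_all_finset]
      intro ℓ hℓ
      have hcont : ContinuousAt (fun s : ℝ => z k + s • ee j) 0 :=
        (continuous_const.add (continuous_id.smul continuous_const)).continuousAt
      exact hcont.eventually_ne (by simpa using hz ℓ hℓ)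
    filter_upwards [hall] with s hs
    have hz' : ∀ ℓ ∈ univ.erase k,
        Function.update z k (z k + s • ee j) k ≠ Function.update z k (z k + s • ee j) ℓ := by
      intro ℓ hℓ
      rw [Function.update_self, Function.update_of_ne (Finset.mem_erase.1 hℓ).1]
      exact hs ℓ hℓ
    rw [grad_formula β Wβ hWβ k j _ hz']
    have h1 : Function.update z k (z k + s • ee j) k j = z k j + s := by
      rw [Function.update_self, path_coord]
    have h2 : ∀ ℓ ∈ univ.erase k,
        ((Function.update z k (z k + s • ee j) k - Function.update z k (z k + s • ee j) ℓ) j)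
            / ‖Function.update z k (z k + s • ee j) k - Function.update z k (z k + s • ee j) ℓ‖^2
        = (((z k - z ℓ) + s • ee j) j) / ‖(z k - z ℓ) + s • ee j‖^2 := by
      intro ℓ hℓ
      rw [Function.update_self, Function.update_of_ne (Finset.mem_erase.1 hℓ).1,
        add_sub_right_comm]
    rw [h1, Finset.sum_congr rfl h2]
  rw [hev.deriv_eq]
  have ha : HasDerivAt (fun s : ℝ => (z k j + s)/2) (1/2) 0 := by
    have := ((hasDerivAt_id (0:ℝ)).const_add (z k j)).div_const 2
    simpa using this
  have hb : HasDerivAt (fun s : ℝ =>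
        ∑ ℓ ∈ univ.erase k, (((z k - z ℓ) + s • ee j) j) / ‖(z k - z ℓ) + s • ee j‖^2)
      (∑ ℓ ∈ univ.erase k, (‖z k - z ℓ‖^2 - 2*((z k - z ℓ) j)^2)/(‖z k - z ℓ‖^2)^2) 0 :=
    HasDerivAt.fun_sum fun ℓ hℓ => hasDerivAt_gradterm _ j (sub_ne_zero.2 (hz ℓ hℓ))
  exact (ha.sub (hb.const_mul c)).deriv

lemma coord_sum {N : ℕ} (s : Finset (Fin N)) (w : Fin N → E2) (j : Fin 2) :
    (∑ ℓ ∈ s, w ℓ) j = ∑ ℓ ∈ s, (w ℓ) j :=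
  map_sum (EuclideanSpace.projₗ (𝕜 := ℝ) j) w s

/-- Lemma `2dehjb`: the explicit pair `(W_β, λ^N)` solves the ergodic HJB equation of the
global problem associated to the open loop Coulomb game; moreover `Δ_z W_β = N` on `𝒟^N`. -/
theorem coulomb_open_loop_hjb (N : ℕ) (hN : 2 ≤ N) (σ β : ℝ) (hσ : 0 ≤ σ)
    (D : Set (Fin N → EuclideanSpace ℝ (Fin 2)))
    (hD : D = {z | Function.Injective z})
    (Wβ : (Fin N → EuclideanSpace ℝ (Fin 2)) → ℝ)
    (hWβ : ∀ z, Wβ z = (∑ i, ‖z i‖ ^ 2) / 4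
      - β / (2 * ((N : ℝ) - 1)) *
          ∑ p ∈ univ.filter (fun p : Fin N × Fin N => p.1 < p.2), Real.log ‖z p.2 - z p.1‖)
    (F : (Fin N → EuclideanSpace ℝ (Fin 2)) → ℝ)
    (hF : ∀ z, F z = (∑ i, ‖z i‖ ^ 2) / 8
      + β ^ 2 / 8 *
          ∑ i, ‖(((N : ℝ) - 1)⁻¹) •
            ∑ k ∈ univ.erase i, (‖z i - z k‖ ^ 2)⁻¹ • (z i - z k)‖ ^ 2)
    (lam : ℝ) (hlam : lam = β / 8 + σ ^ 2 / (2 * ((N : ℝ) - 1))) :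
    ContDiffOn ℝ (⊤ : ℕ∞) Wβ D ∧
    (∀ z ∈ D, (∑ k, ∑ j, pderivCoord2 (pderivCoord2 Wβ k j) k j z) = (N : ℝ)) ∧
    ∀ z ∈ D,
      -(σ ^ 2 / (2 * (N : ℝ) * ((N : ℝ) - 1))) *
          (∑ k, ∑ j, pderivCoord2 (pderivCoord2 Wβ k j) k j z)
        + (1 / (2 * (N : ℝ))) * (∑ k, ∑ j, (pderivCoord2 Wβ k j z) ^ 2)
      = (1 / (N : ℝ)) * F z - lam := by
  have hNR : (2:ℝ) ≤ (N:ℝ) := by exact_mod_cast hN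
  have hN0 : (N:ℝ) ≠ 0 := by linarith
  have hN1 : (N:ℝ) - 1 ≠ 0 := by linarith
  set c := β / (2 * ((N:ℝ)-1)) with hc
  -- distinctness
  have hzk : ∀ z ∈ D, ∀ k : Fin N, ∀ ℓ ∈ univ.erase k, z k ≠ z ℓ := by
    intro z hz k ℓ hℓ h
    rw [hD] at hz
    exact (Finset.mem_erase.1 hℓ).1 (hz h.symm)
  -- Laplacian
  have hlap : ∀ z ∈ D, (∑ k, ∑ j, pderivCoord2 (pderivCoord2 Wβ k j) k j z) = (N : ℝ) := by
    intro z hz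
    have hterm : ∀ k : Fin N, ∑ j, pderivCoord2 (pderivCoord2 Wβ k j) k j z = 1 := by
      intro k
      rw [Finset.sum_congr rfl (fun j _ => lap_formula β Wβ hWβ k j z (hzk z hz k))]
      rw [Fin.sum_univ_two]
      have hzero : ∀ ℓ ∈ univ.erase k,
          (‖z k - z ℓ‖^2 - 2*((z k - z ℓ) 0)^2)/(‖z k - z ℓ‖^2)^2
          + (‖z k - z ℓ‖^2 - 2*((z k - z ℓ) 1)^2)/(‖z k - z ℓ‖^2)^2 = 0 := by
        intro ℓ hℓ
        rw [← add_div]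
        have hns : ‖z k - z ℓ‖^2 = ((z k - z ℓ) 0)^2 + ((z k - z ℓ) 1)^2 := by
          rw [normsq_eq_sum, Fin.sum_univ_two]
        have hnum : (‖z k - z ℓ‖^2 - 2*((z k - z ℓ) 0)^2)
            + (‖z k - z ℓ‖^2 - 2*((z k - z ℓ) 1)^2) = 0 := by rw [hns]; ring
        rw [hnum, zero_div]
      have hs : (∑ ℓ ∈ univ.erase k, (‖z k - z ℓ‖^2 - 2*((z k - z ℓ) 0)^2)/(‖z k - z ℓ‖^2)^2)
          + (∑ ℓ ∈ univ.erase k, (‖z k - z ℓ‖^2 - 2*((z k - z ℓ) 1)^2)/(‖z k - z ℓ‖^2)^2) = 0 := by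
        rw [← Finset.sum_add_distrib, Finset.sum_congr rfl hzero, Finset.sum_const, smul_zero]
      have hmul : β / (2*((N:ℝ)-1)) *
            (∑ ℓ ∈ univ.erase k, (‖z k - z ℓ‖^2 - 2*((z k - z ℓ) 0)^2)/(‖z k - z ℓ‖^2)^2)
          + β / (2*((N:ℝ)-1)) *
            (∑ ℓ ∈ univ.erase k, (‖z k - z ℓ‖^2 - 2*((z k - z ℓ) 1)^2)/(‖z k - z ℓ‖^2)^2) = 0 := by
        rw [← mul_add, hs, mul_zero]
      linarith [hmul]
    rw [Finset.sum_congr rfl (fun k _ => hterm k)]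
    simp
  refine ⟨?_, hlap, ?_⟩
  · -- smoothness
    have hWfun : Wβ = fun z => (∑ i, ‖z i‖ ^ 2) / 4
        - c * ∑ p ∈ univ.filter (fun p : Fin N × Fin N => p.1 < p.2),
            Real.log ‖z p.2 - z p.1‖ := funext hWβ
    rw [hWfun]
    apply ContDiffOn.sub
    · have h1 : ContDiff ℝ (⊤ : ℕ∞) (fun x : Fin N → E2 => ∑ i, ‖x i‖^2) := by
        apply ContDiff.sum
        intro i _
        exact ContDiff.norm_sq ℝ (ContinuousLinearMap.proj (R := ℝ) (φ := fun _ : Fin N => E2) i).contDiff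
      exact (h1.div_const 4).contDiffOn
    · apply ContDiffOn.mul contDiffOn_const
      apply ContDiffOn.sum
      intro p hp x hx
      rw [hD] at hx
      have hne : x p.2 - x p.1 ≠ 0 := by
        refine sub_ne_zero.2 fun h => ?_
        exact ne_of_lt (Finset.mem_filter.1 hp).2 (hx h).symm
      have hlin : ContDiffAt ℝ (⊤ : ℕ∞) (fun x : Fin N → E2 => x p.2 - x p.1) x :=
        ((ContinuousLinearMap.proj p.2 : (Fin N → E2) →L[ℝ] E2)
          - ContinuousLinearMap.proj p.1).contDiff.contDiffAt
      exact ((hlin.norm ℝ hne).log (norm_ne_zero_iff.2 hne)).contDiffWithinAt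
  · -- HJB identity
    intro z hz
    have hinj : Function.Injective z := by rw [hD] at hz; exact hz
    set Sv : Fin N → E2 := fun i => ∑ ℓ ∈ univ.erase i, (‖z i - z ℓ‖^2)⁻¹ • (z i - z ℓ) with hSv
    have hSj : ∀ (k : Fin N) (j : Fin 2),
        (Sv k) j = ∑ ℓ ∈ univ.erase k, ((z k - z ℓ) j)/‖z k - z ℓ‖^2 := by
      intro k j
      simp only [hSv]
      rw [coord_sum]
      refine Finset.sum_congr rfl fun ℓ _ => ?_
      rw [PiLp.smul_apply, smul_eq_mul, div_eq_inv_mul]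
    have hk2 : ∀ k : Fin N, ∑ j, (pderivCoord2 Wβ k j z)^2
        = ‖z k‖^2/4 - c*⟪z k, Sv k⟫ + c^2*‖Sv k‖^2 := by
      intro k
      have hgj : ∀ j, pderivCoord2 Wβ k j z = ((2:ℝ)⁻¹ • z k - c • Sv k) j := by
        intro j
        rw [grad_formula β Wβ hWβ k j z (hzk z hz k), PiLp.sub_apply, PiLp.smul_apply,
          PiLp.smul_apply, smul_eq_mul, smul_eq_mul, hSj]
        ring
      rw [Finset.sum_congr rfl (fun j _ => by rw [hgj j]), ← normsq_eq_sum]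
      rw [norm_sub_sq_real, real_inner_smul_left, real_inner_smul_right,
        norm_smul, norm_smul]
      simp only [Real.norm_eq_abs, mul_pow, sq_abs]
      ring
    have hcross : ∑ k, ⟪z k, Sv k⟫ = (N:ℝ)*((N:ℝ)-1)/2 := by
      have hik : ∀ k : Fin N, ⟪z k, Sv k⟫
          = ∑ ℓ ∈ univ.erase k, (‖z k - z ℓ‖^2)⁻¹ * ⟪z k, z k - z ℓ⟫ := by
        intro k
        simp only [hSv]
        rw [inner_sum]
        exact Finset.sum_congr rfl fun ℓ _ => real_inner_smul_right _ _ _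
      rw [Finset.sum_congr rfl (fun k _ => hik k)]
      refine offdiag_pairing (by omega) _ fun a b hab => ?_
      have hd : z a - z b ≠ 0 := sub_ne_zero.2 fun h => hab (hinj h)
      have hn : ‖z b - z a‖ = ‖z a - z b‖ := norm_sub_rev _ _
      have h1 : ⟪z b, z b - z a⟫ = -⟪z b, z a - z b⟫ := by
        rw [← inner_neg_right, neg_sub]
      have h2 : ⟪z a, z a - z b⟫ - ⟪z b, z a - z b⟫ = ‖z a - z b‖^2 := by
        rw [← inner_sub_left, real_inner_self_eq_norm_sq]
      have hz2 : ‖z a - z b‖^2 ≠ 0 := pow_ne_zero 2 (norm_ne_zero_iff.2 hd)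
      rw [hn, h1]
      have hre : (‖z a - z b‖^2)⁻¹ * ⟪z a, z a - z b⟫
          + (‖z a - z b‖^2)⁻¹ * -⟪z b, z a - z b⟫
          = (‖z a - z b‖^2)⁻¹ * (⟪z a, z a - z b⟫ - ⟪z b, z a - z b⟫) := by ring
      rw [hre, h2, inv_mul_cancel₀ hz2]
    have hgradsq : ∑ k, ∑ j, (pderivCoord2 Wβ k j z)^2
        = (∑ k, ‖z k‖^2)/4 - c * ((N:ℝ)*((N:ℝ)-1)/2) + c^2 * ∑ k, ‖Sv k‖^2 := by
      rw [Finset.sum_congr rfl (fun k _ => hk2 k)]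
      rw [Finset.sum_add_distrib, Finset.sum_sub_distrib, ← Finset.mul_sum, hcross,
        ← Finset.mul_sum, Finset.sum_div]
    have hFz : F z = (∑ i, ‖z i‖ ^ 2) / 8 + β ^ 2 / 8 * (((N:ℝ)-1)⁻¹^2 * ∑ i, ‖Sv i‖^2) := by
      rw [hF z]
      congr 1
      congr 1
      rw [Finset.mul_sum]
      refine Finset.sum_congr rfl fun i _ => ?_
      rw [norm_smul, Real.norm_eq_abs, mul_pow, sq_abs]
    rw [hlap z hz, hgradsq, hFz, hlam, hc]
    field_simp
    ring
end

section
/- Let N ≥ 2, C₂ ∈ ℝ, and set C := C₂/2. For x ∈ ℝᴺ with pairwise distinct coordinates and 1 ≤ i ≤ N define F^{N,i}(x) := (x^i)²/8 + (C₂/(N−1)²) ∑_{k≠i} 1/(x^i − x^k)² and F^N(x) := ‖x‖²/8 + (C/(N−1)²) ∑_{ℓ=1}^N ∑_{k≠ℓ} 1/(x^ℓ − x^k)². Then for every 1 ≤ i ≤ N, every x ∈ ℝᴺ with pairwise distinct coordinates, and every y ∈ ℝ such that the vector x′ obtained from x by replacing the i-th coordinate with y also has pairwise distinct coordinates, one has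 F^N(x′) − F^N(x) = F^{N,i}(x′) − F^{N,i}(x). -/
/-!
The interaction term of `F^N` counts every pair `{ℓ, k}` twice, while `F^{N,i}` counts the pairs
containing `i` once and the weight `C₂` is twice `C`. Moving only the `i`-th particle changes
exactly the pairs containing `i` and the `i`-th summand of `‖x‖²`, so both costs change by the same
amount.
-/

open Finset

section PairSums

variable {ι α M : Type*} [Fintype ι] [DecidableEq ι]

theorem sum_sum_erase_eq_add_sum_sum_erase_erase [AddCommMonoid M] (g : ι → ι → M) (i : ι) :
    ∑ l, ∑ k ∈ univ.erase l, g l k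
      = ∑ k ∈ univ.erase i, (g i k + g k i)
        + ∑ l ∈ univ.erase i, ∑ k ∈ (univ.erase l).erase i, g l k := by
  have hsplit : ∀ l ∈ univ.erase i,
      ∑ k ∈ univ.erase l, g l k = g l i + ∑ k ∈ (univ.erase l).erase i, g l k := fun l hl =>
    (add_sum_erase _ _ (mem_erase.mpr ⟨(ne_of_mem_erase hl).symm, mem_univ i⟩)).symm
  rw [← add_sum_erase _ _ (mem_univ i), sum_congr rfl hsplit, sum_add_distrib, sum_add_distrib]
  abel

variable [AddCommGroup M]

theorem sum_sub_sum_of_eq_of_ne (f : α → M) {x x' : ι → α} {i : ι}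
    (h : ∀ j, j ≠ i → x' j = x j) :
    ∑ l, f (x' l) - ∑ l, f (x l) = f (x' i) - f (x i) := by
  rw [← add_sum_erase _ _ (mem_univ i), ← add_sum_erase _ (fun l ↦ f (x l)) (mem_univ i),
    sum_congr rfl fun j hj ↦ by rw [h j (ne_of_mem_erase hj)]]
  abel

theorem pair_sum_sub_pair_sum_of_eq_of_ne (K : α → α → M) (hK : ∀ a b, K a b = K b a)
    {x x' : ι → α} {i : ι} (h : ∀ j, j ≠ i → x' j = x j) :
    ∑ l, ∑ k ∈ univ.erase l, K (x' l) (x' k) - ∑ l, ∑ k ∈ univ.erase l, K (x l) (x k)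
      = 2 • (∑ k ∈ univ.erase i, K (x' i) (x' k) - ∑ k ∈ univ.erase i, K (x i) (x k)) := by
  have hrest : ∑ l ∈ univ.erase i, ∑ k ∈ (univ.erase l).erase i, K (x' l) (x' k)
      = ∑ l ∈ univ.erase i, ∑ k ∈ (univ.erase l).erase i, K (x l) (x k) :=
    sum_congr rfl fun l hl ↦ sum_congr rfl fun k hk ↦ by
      rw [h l (ne_of_mem_erase hl), h k (ne_of_mem_erase hk)]
  have hsym : ∀ z : ι → α, ∑ k ∈ univ.erase i, (K (z i) (z k) + K (z k) (z i))
      = 2 • ∑ k ∈ univ.erase i, K (z i) (z k) := fun z ↦ by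
    simp only [hK (z _) (z i), ← two_nsmul, sum_nsmul]
  rw [sum_sum_erase_eq_add_sum_sum_erase_erase (fun l k ↦ K (x' l) (x' k)) i,
    sum_sum_erase_eq_add_sum_sum_erase_erase (fun l k ↦ K (x l) (x k)) i, hrest, hsym, hsym,
    smul_sub]
  abel

end PairSums

theorem dyson_potential_structure_general (N : ℕ) (C₂ C : ℝ) (hC : C = C₂ / 2)
    (F : Fin N → (Fin N → ℝ) → ℝ)
    (hF : ∀ i x, F i x = (x i) ^ 2 / 8
      + C₂ / ((N : ℝ) - 1) ^ 2 * ∑ k ∈ univ.erase i, ((x i - x k) ^ 2)⁻¹)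
    (G : (Fin N → ℝ) → ℝ)
    (hG : ∀ x, G x = (∑ l, (x l) ^ 2) / 8
      + C / ((N : ℝ) - 1) ^ 2 * ∑ l, ∑ k ∈ univ.erase l, ((x l - x k) ^ 2)⁻¹)
    (i : Fin N) (x : Fin N → ℝ) (y : ℝ) :
    G (Function.update x i y) - G x = F i (Function.update x i y) - F i x := by
  have hoff : ∀ j, j ≠ i → Function.update x i y j = x j := fun j hj ↦ Function.update_of_ne hj y x
  have hsq := sum_sub_sum_of_eq_of_ne (· ^ 2) hoff
  have hpair := pair_sum_sub_pair_sum_of_eq_of_ne (fun a b ↦ ((a - b) ^ 2)⁻¹)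
    (fun a b ↦ by rw [← neg_sub, neg_sq]) hoff
  rw [two_nsmul] at hpair
  rw [hG, hG, hF, hF, hC]
  linear_combination hsq / 8 + C₂ / 2 / ((N : ℝ) - 1) ^ 2 * hpair

/-- The state-cost identity underlying Lemma `potentialgame`: with `C = C₂/2`, a unilateral
deviation of player `i` changes the global cost `F^N` by exactly the change in player `i`'s
individual cost `F^{N,i}`; the open loop Dyson game is a potential game. -/
theorem dyson_potential_structure (N : ℕ) (hN : 2 ≤ N) (C₂ C : ℝ) (hC : C = C₂ / 2)
    (F : Fin N → (Fin N → ℝ) → ℝ)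
    (hF : ∀ i x, F i x = (x i) ^ 2 / 8
      + C₂ / ((N : ℝ) - 1) ^ 2 * ∑ k ∈ univ.erase i, ((x i - x k) ^ 2)⁻¹)
    (G : (Fin N → ℝ) → ℝ)
    (hG : ∀ x, G x = (∑ l, (x l) ^ 2) / 8
      + C / ((N : ℝ) - 1) ^ 2 * ∑ l, ∑ k ∈ univ.erase l, ((x l - x k) ^ 2)⁻¹)
    (i : Fin N) (x : Fin N → ℝ) (hx : Function.Injective x) (y : ℝ)
    (hx' : Function.Injective (Function.update x i y)) :
    G (Function.update x i y) - G x = F i (Function.update x i y) - F i x :=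
  dyson_potential_structure_general N C₂ C hC F hF G hG i x y
end

section
/- Let N ≥ 2 and let z¹, …, zᴺ ∈ ℝ² be pairwise distinct. Then ∑_{i=1}^N ∑_{j≠i} ∑_{k≠i} ⟨(z^i − z^j)/|z^i − z^j|², (z^i − z^k)/|z^i − z^k|²⟩ = (1/3) ∑_{i=1}^N ∑_{j≠i} ∑_{k≠i,j} 2(|z^i−z^j|²|z^i−z^k|² − ⟨z^i−z^j, z^i−z^k⟩²)/(|z^i−z^j|²|z^i−z^k|²|z^j−z^k|²) + ∑_{i=1}^N ∑_{j≠i} 1/|z^i − z^j|². -/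
/-!
Separating the diagonal `k = j` of the left-hand side leaves `∑ 1/|zⁱ - zʲ|²`. The rest is a sum
over ordered triples of distinct indices, which is invariant under cyclic rotation of the triple,
so it equals one third of the sum of its cyclic symmetrizations. For a single triangle `p, q, r`
the cyclic sum `⟨(p - q)/|p - q|², (p - r)/|p - r|²⟩ + (cyclic)` is a rational function of
`x = |p - q|²`, `y = |p - r|²` and `d = ⟨p - q, p - r⟩`, because `|q - r|² = x - 2d + y`,
and it simplifies to `2 (x y - d²) / (x y |q - r|²)`.
-/

open Finset RealInnerProductSpace

section InnerProduct

variable {E : Type*} [NormedAddCommGroup E] [InnerProductSpace ℝ E]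

theorem inner_inv_norm_sq_smul_self (a : E) :
    ⟪(‖a‖ ^ 2)⁻¹ • a, (‖a‖ ^ 2)⁻¹ • a⟫ = (‖a‖ ^ 2)⁻¹ := by
  rw [real_inner_smul_left, real_inner_smul_right, real_inner_self_eq_norm_sq]
  rcases eq_or_ne (‖a‖ ^ 2) 0 with h | h
  · simp [h]
  · field_simp

theorem cyclic_sum_inner_inv_norm_sq_smul_sub {p q r : E}
    (hpq : p ≠ q) (hpr : p ≠ r) (hqr : q ≠ r) :
    ⟪(‖p - q‖ ^ 2)⁻¹ • (p - q), (‖p - r‖ ^ 2)⁻¹ • (p - r)⟫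
      + ⟪(‖q - r‖ ^ 2)⁻¹ • (q - r), (‖q - p‖ ^ 2)⁻¹ • (q - p)⟫
      + ⟪(‖r - p‖ ^ 2)⁻¹ • (r - p), (‖r - q‖ ^ 2)⁻¹ • (r - q)⟫
    = 2 * (‖p - q‖ ^ 2 * ‖p - r‖ ^ 2 - ⟪p - q, p - r⟫ ^ 2)
        / (‖p - q‖ ^ 2 * ‖p - r‖ ^ 2 * ‖q - r‖ ^ 2) := by
  have hx : ‖p - q‖ ^ 2 ≠ 0 := by simpa [sub_eq_zero] using hpq
  have hy : ‖p - r‖ ^ 2 ≠ 0 := by simpa [sub_eq_zero] using hpr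
  have hw : ‖q - r‖ ^ 2 ≠ 0 := by simpa [sub_eq_zero] using hqr
  have hqr_eq : q - r = (p - r) - (p - q) := by abel
  have hw_eq : ‖q - r‖ ^ 2 = ‖p - q‖ ^ 2 - 2 * ⟪p - q, p - r⟫ + ‖p - r‖ ^ 2 := by
    rw [hqr_eq, norm_sub_sq_real, real_inner_comm]; ring
  have hq_inner : ⟪q - r, q - p⟫ = ‖p - q‖ ^ 2 - ⟪p - q, p - r⟫ := by
    rw [hqr_eq, ← neg_sub p q, inner_neg_right, inner_sub_left, real_inner_self_eq_norm_sq,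
      real_inner_comm]
    ring
  have hr_inner : ⟪r - p, r - q⟫ = ‖p - r‖ ^ 2 - ⟪p - q, p - r⟫ := by
    rw [← neg_sub p r, ← neg_sub q r, hqr_eq, inner_neg_neg, inner_sub_right,
      real_inner_self_eq_norm_sq, real_inner_comm (p - q) (p - r)]
  simp only [real_inner_smul_left, real_inner_smul_right, hq_inner, hr_inner,
    norm_sub_rev q p, norm_sub_rev r p, norm_sub_rev r q]
  generalize ‖p - q‖ ^ 2 = x at *
  generalize ‖p - r‖ ^ 2 = y at *
  generalize ‖q - r‖ ^ 2 = w at *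
  generalize ⟪p - q, p - r⟫ = d at *
  field_simp
  rw [hw_eq]
  ring

end InnerProduct

section DistinctTriples

variable (ι : Type*) [Fintype ι] [DecidableEq ι]

def distinctTriples : Finset (ι × ι × ι) :=
  univ.filter fun t => t.1 ≠ t.2.1 ∧ t.1 ≠ t.2.2 ∧ t.2.1 ≠ t.2.2

variable {ι}

theorem mem_distinctTriples {t : ι × ι × ι} :
    t ∈ distinctTriples ι ↔ t.1 ≠ t.2.1 ∧ t.1 ≠ t.2.2 ∧ t.2.1 ≠ t.2.2 := by
  simp [distinctTriples]

theorem sum_distinctTriples {M : Type*} [AddCommMonoid M] (f : ι → ι → ι → M) :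
    ∑ t ∈ distinctTriples ι, f t.1 t.2.1 t.2.2
      = ∑ i, ∑ j ∈ univ.erase i, ∑ k ∈ (univ.erase i).erase j, f i j k := by
  simp only [distinctTriples, sum_filter, Fintype.sum_prod_type, ← filter_ne', filter_filter,
    ite_and, ← ite_sum_zero]
  simp only [ne_comm]

theorem sum_distinctTriples_rotate {M : Type*} [AddCommMonoid M] (f : ι → ι → ι → M) :
    ∑ t ∈ distinctTriples ι, f t.2.1 t.2.2 t.1 = ∑ t ∈ distinctTriples ι, f t.1 t.2.1 t.2.2 :=
  sum_nbij' (fun t => (t.2.1, t.2.2, t.1)) (fun t => (t.2.2, t.1, t.2.1))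
    (fun t ht => by simp only [mem_distinctTriples] at ht ⊢; tauto)
    (fun t ht => by simp only [mem_distinctTriples] at ht ⊢; tauto)
    (fun _ _ => rfl) (fun _ _ => rfl) (fun _ _ => rfl)

theorem three_nsmul_sum_distinctTriples {M : Type*} [AddCommMonoid M] (f : ι → ι → ι → M) :
    3 • ∑ t ∈ distinctTriples ι, f t.1 t.2.1 t.2.2
      = ∑ t ∈ distinctTriples ι, (f t.1 t.2.1 t.2.2 + f t.2.1 t.2.2 t.1 + f t.2.2 t.1 t.2.1) := by
  rw [sum_add_distrib, sum_add_distrib, sum_distinctTriples_rotate fun i j k => f j k i,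
    sum_distinctTriples_rotate, succ_nsmul, two_nsmul]

end DistinctTriples

theorem coulomb_triple_sum_identity_general (N : ℕ)
    (z : Fin N → EuclideanSpace ℝ (Fin 2)) (hz : Function.Injective z) :
    ∑ i, ∑ j ∈ univ.erase i, ∑ k ∈ univ.erase i,
        ⟪(‖z i - z j‖ ^ 2)⁻¹ • (z i - z j), (‖z i - z k‖ ^ 2)⁻¹ • (z i - z k)⟫
    = (1 / 3) * ∑ i, ∑ j ∈ univ.erase i, ∑ k ∈ (univ.erase i).erase j,
          2 * (‖z i - z j‖ ^ 2 * ‖z i - z k‖ ^ 2 - ⟪z i - z j, z i - z k⟫ ^ 2)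
            / (‖z i - z j‖ ^ 2 * ‖z i - z k‖ ^ 2 * ‖z j - z k‖ ^ 2)
      + ∑ i, ∑ j ∈ univ.erase i, (‖z i - z j‖ ^ 2)⁻¹ := by
  set F : Fin N → Fin N → Fin N → ℝ := fun i j k =>
    ⟪(‖z i - z j‖ ^ 2)⁻¹ • (z i - z j), (‖z i - z k‖ ^ 2)⁻¹ • (z i - z k)⟫
  have off_diagonal :
      3 * ∑ i, ∑ j ∈ univ.erase i, ∑ k ∈ (univ.erase i).erase j, F i j k
        = ∑ i, ∑ j ∈ univ.erase i, ∑ k ∈ (univ.erase i).erase j,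
          2 * (‖z i - z j‖ ^ 2 * ‖z i - z k‖ ^ 2 - ⟪z i - z j, z i - z k⟫ ^ 2)
            / (‖z i - z j‖ ^ 2 * ‖z i - z k‖ ^ 2 * ‖z j - z k‖ ^ 2) := by
    rw [← sum_distinctTriples, ← sum_distinctTriples, ← Nat.ofNat_nsmul_eq_mul,
      three_nsmul_sum_distinctTriples]
    refine sum_congr rfl fun t ht => ?_
    obtain ⟨hij, hik, hjk⟩ := mem_distinctTriples.mp ht
    exact cyclic_sum_inner_inv_norm_sq_smul_sub (hz.ne hij) (hz.ne hik) (hz.ne hjk)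
  have split_diagonal : ∀ i, ∀ j ∈ univ.erase i,
      ∑ k ∈ univ.erase i, F i j k
        = ∑ k ∈ (univ.erase i).erase j, F i j k + (‖z i - z j‖ ^ 2)⁻¹ := fun i j hj => by
    rw [← sum_erase_add _ _ hj]
    exact congrArg _ (inner_inv_norm_sq_smul_self _)
  rw [sum_congr rfl fun i _ => sum_congr rfl (split_diagonal i)]
  simp only [sum_add_distrib]
  linarith

/-- The triple-sum symmetrization identity at the heart of Lemma `2dpotentialgame`
(the potential structure of the open loop Coulomb game). -/
theorem coulomb_triple_sum_identity (N : ℕ) (hN : 2 ≤ N)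
    (z : Fin N → EuclideanSpace ℝ (Fin 2)) (hz : Function.Injective z) :
    ∑ i, ∑ j ∈ univ.erase i, ∑ k ∈ univ.erase i,
        ⟪(‖z i - z j‖ ^ 2)⁻¹ • (z i - z j), (‖z i - z k‖ ^ 2)⁻¹ • (z i - z k)⟫
    = (1 / 3) * ∑ i, ∑ j ∈ univ.erase i, ∑ k ∈ (univ.erase i).erase j,
          2 * (‖z i - z j‖ ^ 2 * ‖z i - z k‖ ^ 2 - ⟪z i - z j, z i - z k⟫ ^ 2)
            / (‖z i - z j‖ ^ 2 * ‖z i - z k‖ ^ 2 * ‖z j - z k‖ ^ 2)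
      + ∑ i, ∑ j ∈ univ.erase i, (‖z i - z j‖ ^ 2)⁻¹ :=
  coulomb_triple_sum_identity_general N z hz
end

section
/- Let N ≥ 2, C₁ > 0, and set C₂ := 2C₁ and C := C₁. For z = (z¹,…,zᴺ) ∈ (ℝ²)ᴺ with pairwise distinct components and 1 ≤ i ≤ N define F^{N,i}(z) := |z^i|²/8 + (C₁/(N−1)²) ∑_{j≠i} ∑_{k≠i,j} 2(|z^i−z^j|²|z^i−z^k|² − ⟨z^i−z^j, z^i−z^k⟩²)/(|z^i−z^j|²|z^i−z^k|²|z^j−z^k|²) + (C₂/(N−1)²) ∑_{k≠i} 1/|z^i − z^k|², and F^N(z) := ‖z‖²/8 + C ∑_{i=1}^N |(1/(N−1)) ∑_{k≠i} (z^i − z^k)/|z^i − z^k|²|². Then for every 1 ≤ i ≤ N, every z with pairwise distinct components, and every y ∈ ℝ² such that the vector z′ obtained from z by replacing the i-th component with y also has pairwise distinct components, one has F^N(z′) − F^N(z) = F^{N,i}(z′) − F^{N,i}(z). -/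
open Finset RealInnerProductSpace

/-!
Expanding the squares, `F^N(z)` is a sum of pair terms `|z^l - z^k|⁻²` and of triple terms
`⟨(z^l - z^k)/|z^l - z^k|², (z^l - z^m)/|z^l - z^m|²⟩` over distinct indices, plus the
confinement term. Sorting these by whether they involve `i`: the pair terms involving `i` give
`2 ∑_k |z^i - z^k|⁻²`, and the three triple terms of a triangle `{i, j, k}` add up to `2/D²`
(an identity valid in any real inner product space). So
`F^N(z) = F^{N,i}(z) + F^{N-1}(z without z^i)`, and the last summand does not see `z^i`.
-/

section SumSplitting

variable {ι M : Type*} [DecidableEq ι] [AddCommMonoid M] {s : Finset ι} {i : ι}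

theorem Finset.sum_erase_eq_add_sum_erase_erase (hi : i ∈ s) {l : ι} (hil : i ≠ l)
    (f : ι → M) : ∑ k ∈ s.erase l, f k = f i + ∑ k ∈ (s.erase i).erase l, f k := by
  rw [← add_sum_erase _ _ (mem_erase.2 ⟨hil, hi⟩), erase_right_comm]

theorem Finset.sum_distinct_pairs_split (hi : i ∈ s) (f : ι → ι → M) :
    ∑ l ∈ s, ∑ k ∈ s.erase l, f l k
      = ∑ k ∈ s.erase i, (f i k + f k i)
        + ∑ l ∈ s.erase i, ∑ k ∈ (s.erase i).erase l, f l k := by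
  rw [← add_sum_erase _ _ hi, sum_congr rfl fun l hl =>
      sum_erase_eq_add_sum_erase_erase hi (ne_of_mem_erase hl).symm (f l),
    sum_add_distrib, sum_add_distrib, add_assoc]

theorem Finset.sum_distinct_triples_split (hi : i ∈ s) (t : ι → ι → ι → M) :
    ∑ l ∈ s, ∑ k ∈ s.erase l, ∑ m ∈ (s.erase l).erase k, t l k m
      = ∑ j ∈ s.erase i, ∑ k ∈ (s.erase i).erase j, (t i j k + t j i k + t k j i)
        + ∑ l ∈ s.erase i, ∑ k ∈ (s.erase i).erase l,
            ∑ m ∈ ((s.erase i).erase l).erase k, t l k m := by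
  have split_rest : ∀ l ∈ s.erase i, ∀ k ∈ (s.erase i).erase l,
      ∑ m ∈ (s.erase l).erase k, t l k m
        = t l k i + ∑ m ∈ ((s.erase i).erase l).erase k, t l k m := fun l hl k hk => by
    rw [sum_erase_eq_add_sum_erase_erase (mem_erase.2 ⟨(ne_of_mem_erase hl).symm, hi⟩)
      (ne_of_mem_erase (mem_of_mem_erase hk)).symm, erase_right_comm (a := l)]
  have swap : ∑ l ∈ s.erase i, ∑ k ∈ (s.erase i).erase l, t l k i
      = ∑ j ∈ s.erase i, ∑ k ∈ (s.erase i).erase j, t k j i :=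
    sum_comm' fun _ _ => by simp only [mem_erase]; tauto
  have pairs_with_i : ∑ k ∈ s.erase i,
      (∑ m ∈ (s.erase i).erase k, t i k m + ∑ m ∈ (s.erase k).erase i, t k i m)
        = ∑ j ∈ s.erase i, ∑ k ∈ (s.erase i).erase j, (t i j k + t j i k) :=
    sum_congr rfl fun k _ => by rw [erase_right_comm (a := k), sum_add_distrib]
  rw [sum_distinct_pairs_split hi, pairs_with_i,
    sum_congr rfl fun l hl => sum_congr rfl (split_rest l hl)]
  simp only [sum_add_distrib]
  rw [swap]
  abel

end SumSplitting

section CoulombField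

variable {E : Type*} [NormedAddCommGroup E] [InnerProductSpace ℝ E]

noncomputable def coulombField (x : E) : E := (‖x‖ ^ 2)⁻¹ • x

theorem norm_sq_coulombField (x : E) : ‖coulombField x‖ ^ 2 = (‖x‖ ^ 2)⁻¹ := by
  rcases eq_or_ne x 0 with rfl | hx
  · simp [coulombField]
  · rw [coulombField, norm_smul, mul_pow, norm_inv, norm_pow, norm_norm, inv_pow]
    field_simp

theorem inner_coulombField (x y : E) :
    ⟪coulombField x, coulombField y⟫ = ⟪x, y⟫ / (‖x‖ ^ 2 * ‖y‖ ^ 2) := by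
  rw [coulombField, coulombField, real_inner_smul_left, real_inner_smul_right]
  field_simp

theorem inner_coulombField_triangle {a b c : E} (hab : a ≠ b) (hac : a ≠ c) (hbc : b ≠ c) :
    ⟪coulombField (a - b), coulombField (a - c)⟫ + ⟪coulombField (b - a), coulombField (b - c)⟫
        + ⟪coulombField (c - b), coulombField (c - a)⟫
      = 2 * (‖a - b‖ ^ 2 * ‖a - c‖ ^ 2 - ⟪a - b, a - c⟫ ^ 2)
          / (‖a - b‖ ^ 2 * ‖a - c‖ ^ 2 * ‖b - c‖ ^ 2) := by
  have hU : ‖a - b‖ ≠ 0 := norm_ne_zero_iff.2 (sub_ne_zero.2 hab)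
  have hV : ‖a - c‖ ≠ 0 := norm_ne_zero_iff.2 (sub_ne_zero.2 hac)
  have hW : ‖(a - c) - (a - b)‖ ≠ 0 := by
    rw [sub_sub_sub_cancel_left]; exact norm_ne_zero_iff.2 (sub_ne_zero.2 hbc)
  rw [← neg_sub a b, ← neg_sub a c, ← sub_sub_sub_cancel_left c b a,
    ← sub_sub_sub_cancel_left b c a]
  generalize a - b = u at *
  generalize a - c = v at *
  have law_of_cosines : ‖v - u‖ ^ 2 = ‖u‖ ^ 2 + ‖v‖ ^ 2 - 2 * ⟪u, v⟫ := by
    rw [norm_sub_sq_real, real_inner_comm]; ring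
  simp only [inner_coulombField, norm_neg, inner_neg_left, inner_neg_right,
    inner_sub_left, inner_sub_right, real_inner_self_eq_norm_sq, norm_sub_rev u v]
  field_simp
  rw [law_of_cosines]
  ring

end CoulombField

section CoulombPotential

variable {ι E : Type*} [DecidableEq ι] [NormedAddCommGroup E] [InnerProductSpace ℝ E]

theorem norm_sq_sum_eq_sum_add_sum_inner (s : Finset ι) (v : ι → E) :
    ‖∑ k ∈ s, v k‖ ^ 2 = ∑ k ∈ s, ‖v k‖ ^ 2 + ∑ k ∈ s, ∑ m ∈ s.erase k, ⟪v k, v m⟫ := by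
  rw [← real_inner_self_eq_norm_sq, sum_inner, ← sum_add_distrib]
  refine sum_congr rfl fun k hk => ?_
  rw [inner_sum, ← add_sum_erase _ _ hk, real_inner_self_eq_norm_sq]

/-- With `c = C / (N - 1)²` and `s = univ` this is `F^N`; `coulombPlayerCost` is likewise
`F^{N,i}` with `C₂ = 2 C₁`. -/
noncomputable def coulombPotential (c : ℝ) (s : Finset ι) (z : ι → E) : ℝ :=
  (∑ l ∈ s, ‖z l‖ ^ 2) / 8 + c * ∑ l ∈ s, ‖∑ k ∈ s.erase l, coulombField (z l - z k)‖ ^ 2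

noncomputable def coulombPlayerCost (c : ℝ) (s : Finset ι) (i : ι) (z : ι → E) : ℝ :=
  ‖z i‖ ^ 2 / 8
    + c * ∑ j ∈ s.erase i, ∑ k ∈ (s.erase i).erase j,
        2 * (‖z i - z j‖ ^ 2 * ‖z i - z k‖ ^ 2 - ⟪z i - z j, z i - z k⟫ ^ 2)
          / (‖z i - z j‖ ^ 2 * ‖z i - z k‖ ^ 2 * ‖z j - z k‖ ^ 2)
    + 2 * c * ∑ k ∈ s.erase i, (‖z i - z k‖ ^ 2)⁻¹

theorem coulombPotential_congr {c : ℝ} {s : Finset ι} {z w : ι → E} (h : ∀ l ∈ s, z l = w l) :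
    coulombPotential c s z = coulombPotential c s w := by
  unfold coulombPotential
  congr 2
  · exact sum_congr rfl fun l hl => by rw [h l hl]
  · exact sum_congr rfl fun l hl => by
      rw [h l hl, sum_congr rfl fun k hk => by rw [h k (mem_of_mem_erase hk)]]

theorem coulombPotential_eq_playerCost_add_erase (c : ℝ) {s : Finset ι} {i : ι} (hi : i ∈ s)
    {z : ι → E} (hz : Set.InjOn z s) :
    coulombPotential c s z = coulombPlayerCost c s i z + coulombPotential c (s.erase i) z := by
  have pairs_with_i : ∑ k ∈ s.erase i, ((‖z i - z k‖ ^ 2)⁻¹ + (‖z k - z i‖ ^ 2)⁻¹)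
      = 2 * ∑ k ∈ s.erase i, (‖z i - z k‖ ^ 2)⁻¹ := by
    rw [mul_sum]; exact sum_congr rfl fun k _ => by rw [norm_sub_rev]; ring
  have triangles_with_i : ∑ j ∈ s.erase i, ∑ k ∈ (s.erase i).erase j,
      (⟪coulombField (z i - z j), coulombField (z i - z k)⟫
        + ⟪coulombField (z j - z i), coulombField (z j - z k)⟫
        + ⟪coulombField (z k - z j), coulombField (z k - z i)⟫)
      = ∑ j ∈ s.erase i, ∑ k ∈ (s.erase i).erase j,
          2 * (‖z i - z j‖ ^ 2 * ‖z i - z k‖ ^ 2 - ⟪z i - z j, z i - z k⟫ ^ 2)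
            / (‖z i - z j‖ ^ 2 * ‖z i - z k‖ ^ 2 * ‖z j - z k‖ ^ 2) := by
    refine sum_congr rfl fun j hj => sum_congr rfl fun k hk => ?_
    have hj' := mem_of_mem_erase hj
    have hk' := mem_of_mem_erase (mem_of_mem_erase hk)
    exact inner_coulombField_triangle (hz.ne hi hj' (ne_of_mem_erase hj).symm)
      (hz.ne hi hk' (ne_of_mem_erase (mem_of_mem_erase hk)).symm)
      (hz.ne hj' hk' (ne_of_mem_erase hk).symm)
  unfold coulombPotential coulombPlayerCost
  simp only [norm_sq_sum_eq_sum_add_sum_inner, norm_sq_coulombField, sum_add_distrib]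
  rw [sum_distinct_pairs_split hi, sum_distinct_triples_split hi, pairs_with_i, triangles_with_i,
    ← add_sum_erase s (fun l => ‖z l‖ ^ 2) hi]
  ring

end CoulombPotential

theorem coulomb_potential_structure_general (N : ℕ) (C₁ : ℝ)
    (C₂ C : ℝ) (hC₂ : C₂ = 2 * C₁) (hC : C = C₁)
    (F : Fin N → (Fin N → EuclideanSpace ℝ (Fin 2)) → ℝ)
    (hF : ∀ i z, F i z = ‖z i‖ ^ 2 / 8
      + C₁ / ((N : ℝ) - 1) ^ 2 *
          ∑ j ∈ univ.erase i, ∑ k ∈ (univ.erase i).erase j,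
            2 * (‖z i - z j‖ ^ 2 * ‖z i - z k‖ ^ 2 - ⟪z i - z j, z i - z k⟫ ^ 2)
              / (‖z i - z j‖ ^ 2 * ‖z i - z k‖ ^ 2 * ‖z j - z k‖ ^ 2)
      + C₂ / ((N : ℝ) - 1) ^ 2 * ∑ k ∈ univ.erase i, (‖z i - z k‖ ^ 2)⁻¹)
    (G : (Fin N → EuclideanSpace ℝ (Fin 2)) → ℝ)
    (hG : ∀ z, G z = (∑ l, ‖z l‖ ^ 2) / 8
      + C * ∑ l, ‖(((N : ℝ) - 1)⁻¹) •
          ∑ k ∈ univ.erase l, (‖z l - z k‖ ^ 2)⁻¹ • (z l - z k)‖ ^ 2)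
    (i : Fin N) (z : Fin N → EuclideanSpace ℝ (Fin 2))
    (hz : Function.Injective z) (y : EuclideanSpace ℝ (Fin 2))
    (hz' : Function.Injective (Function.update z i y)) :
    G (Function.update z i y) - G z = F i (Function.update z i y) - F i z := by
  have hG_eq : ∀ w, G w = coulombPotential (C₁ / ((N : ℝ) - 1) ^ 2) univ w := fun w => by
    simp only [hG, hC, coulombPotential, norm_smul, mul_pow, norm_inv, Real.norm_eq_abs, sq_abs,
      inv_pow, ← mul_sum, div_eq_mul_inv C₁, mul_assoc]
    rfl
  have hF_eq : ∀ w, F i w = coulombPlayerCost (C₁ / ((N : ℝ) - 1) ^ 2) univ i w := fun w => by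
    rw [hF, hC₂, coulombPlayerCost, mul_div_assoc]
  rw [hG_eq, hG_eq, hF_eq, hF_eq,
    coulombPotential_eq_playerCost_add_erase _ (mem_univ i) hz.injOn,
    coulombPotential_eq_playerCost_add_erase _ (mem_univ i) hz'.injOn,
    coulombPotential_congr fun l hl => Function.update_of_ne (ne_of_mem_erase hl) _ _]
  ring

/-- Lemma `2dpotentialgame`: with `C = C₁ = C₂/2`, the open loop Coulomb game is a
potential game at the level of the state costs: a unilateral deviation of player `i`
changes the global cost `F^N` by exactly the change in player `i`'s cost `F^{N,i}`. -/
theorem coulomb_potential_structure (N : ℕ) (hN : 2 ≤ N) (C₁ : ℝ) (hC₁ : 0 < C₁)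
    (C₂ C : ℝ) (hC₂ : C₂ = 2 * C₁) (hC : C = C₁)
    (F : Fin N → (Fin N → EuclideanSpace ℝ (Fin 2)) → ℝ)
    (hF : ∀ i z, F i z = ‖z i‖ ^ 2 / 8
      + C₁ / ((N : ℝ) - 1) ^ 2 *
          ∑ j ∈ univ.erase i, ∑ k ∈ (univ.erase i).erase j,
            2 * (‖z i - z j‖ ^ 2 * ‖z i - z k‖ ^ 2 - ⟪z i - z j, z i - z k⟫ ^ 2)
              / (‖z i - z j‖ ^ 2 * ‖z i - z k‖ ^ 2 * ‖z j - z k‖ ^ 2)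
      + C₂ / ((N : ℝ) - 1) ^ 2 * ∑ k ∈ univ.erase i, (‖z i - z k‖ ^ 2)⁻¹)
    (G : (Fin N → EuclideanSpace ℝ (Fin 2)) → ℝ)
    (hG : ∀ z, G z = (∑ l, ‖z l‖ ^ 2) / 8
      + C * ∑ l, ‖(((N : ℝ) - 1)⁻¹) •
          ∑ k ∈ univ.erase l, (‖z l - z k‖ ^ 2)⁻¹ • (z l - z k)‖ ^ 2)
    (i : Fin N) (z : Fin N → EuclideanSpace ℝ (Fin 2))
    (hz : Function.Injective z) (y : EuclideanSpace ℝ (Fin 2))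
    (hz' : Function.Injective (Function.update z i y)) :
    G (Function.update z i y) - G z = F i (Function.update z i y) - F i z :=
  coulomb_potential_structure_general N C₁ C₂ C hC₂ hC F hF G hG i z hz y hz'
end

section
/- Let 1 < p < ∞. There exists a constant Cₚ > 0 depending only on p such that for every probability measure ν on ℝ having finite second moment and a density n ∈ Lᵖ(ℝ) with respect to Lebesgue measure, and for every z ∈ ℝ, the integral ∫_ℝ log|z − x| ν(dx) converges absolutely and | ∫_ℝ log|z − x| ν(dx) | ≤ Cₚ (1 + ‖n‖_{Lᵖ(ℝ)} + z² + ∫_ℝ x² ν(dx)). -/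
/-!
Split `|log |t||` into a part that is large only near `t = 0` and a part that grows at infinity:
`|log |t|| ≤ ε⁻¹ |t|^{-ε} 𝟙_{[-1,1]}(t) + |t|`. With `q` the conjugate exponent of `p` and
`ε = 1 / (2q)`, the singular part lies in `Lᵠ`, so Hölder's inequality against the density
`n ∈ Lᵖ` bounds its `ν`-integral by a multiple of `‖n‖_p`, uniformly in the centre `z`
by translation invariance. The growing part is at most `1 + z² + x²`, whose `ν`-integral
is `1 + z² + ∫ x² dν`.
-/

open MeasureTheory Set
open scoped ENNReal

namespace Real

lemma abs_log_le_rpow_neg_div {s ε : ℝ} (hε : 0 < ε) (hs₀ : 0 ≤ s) (hs₁ : s ≤ 1) :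
    |log s| ≤ s ^ (-ε) / ε := by
  rw [abs_of_nonpos (log_nonpos hs₀ hs₁), ← log_inv, rpow_neg hs₀, ← inv_rpow hs₀]
  exact log_le_rpow_div (inv_nonneg.2 hs₀) hε

lemma abs_log_le_self {s : ℝ} (hs : 1 ≤ s) : |log s| ≤ s := by
  rw [abs_of_nonneg (log_nonneg hs)]
  exact (log_le_sub_one_of_pos (by linarith)).trans (by linarith)

end Real

noncomputable def truncAbsRpow (r t : ℝ) : ℝ := (Icc (-1) 1).indicator (fun t => |t| ^ r) t

lemma truncAbsRpow_nonneg (r t : ℝ) : 0 ≤ truncAbsRpow r t :=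
  indicator_nonneg (fun t _ => Real.rpow_nonneg (abs_nonneg t) r) t

@[fun_prop]
lemma measurable_truncAbsRpow (r : ℝ) : Measurable (truncAbsRpow r) :=
  (measurable_id.abs.pow_const r).indicator measurableSet_Icc

lemma truncAbsRpow_rpow {s : ℝ} (hs : 0 < s) (r t : ℝ) :
    truncAbsRpow r t ^ s = truncAbsRpow (r * s) t := by
  by_cases ht : t ∈ Icc (-1) 1
  · simp only [truncAbsRpow, indicator_of_mem ht, ← Real.rpow_mul (abs_nonneg t)]
  · simp only [truncAbsRpow, indicator_of_notMem ht, Real.zero_rpow hs.ne']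

lemma integrable_truncAbsRpow {r : ℝ} (hr : -1 < r) : Integrable (truncAbsRpow r) := by
  have hloc : LocallyIntegrable (fun t : ℝ => |t| ^ r) :=
    locallyIntegrable_of_norm_le_rpow (C := 1) (α := -r) (by simp) (by rw [Module.finrank_self, Nat.cast_one]; linarith)
      (ae_of_all _ fun t => by simp [abs_of_nonneg (Real.rpow_nonneg (abs_nonneg t) r)])
      (measurable_id.abs.pow_const r).aestronglyMeasurable
  exact (hloc.integrableOn_isCompact isCompact_Icc).integrable_indicator measurableSet_Icc

lemma memLp_truncAbsRpow {r s : ℝ} (hs : 0 < s) (hrs : -1 < r * s) :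
    MemLp (truncAbsRpow r) (ENNReal.ofReal s) := by
  rw [← integrable_norm_rpow_iff (measurable_truncAbsRpow r).aestronglyMeasurable
    (by simpa using hs) ENNReal.ofReal_ne_top, ENNReal.toReal_ofReal hs.le]
  simpa only [Real.norm_of_nonneg (truncAbsRpow_nonneg r _), truncAbsRpow_rpow hs]
    using integrable_truncAbsRpow hrs

lemma abs_log_abs_le {ε : ℝ} (hε : 0 < ε) (t : ℝ) :
    |Real.log (|t|)| ≤ truncAbsRpow (-ε) t / ε + |t| := by
  rcases le_or_gt |t| 1 with ht | ht
  · have hmem : t ∈ Icc (-1) 1 := abs_le.1 ht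
    have := Real.abs_log_le_rpow_neg_div hε (abs_nonneg t) ht
    rw [truncAbsRpow, indicator_of_mem hmem]
    linarith [abs_nonneg t]
  · have := div_nonneg (truncAbsRpow_nonneg (-ε) t) hε.le
    linarith [Real.abs_log_le_self ht.le]

lemma abs_log_abs_sub_le {ε : ℝ} (hε : 0 < ε) (z x : ℝ) :
    |Real.log (|z - x|)| ≤ truncAbsRpow (-ε) (z - x) / ε + (1 + z ^ 2 + x ^ 2) := by
  have hzx : |z - x| ≤ 1 + z ^ 2 + x ^ 2 := by
    nlinarith [abs_sub z x, sq_abs z, sq_abs x, sq_nonneg (|z| - 1), sq_nonneg (|x| - 1)]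
  linarith [abs_log_abs_le hε (z - x)]

section Holder

variable {α : Type*} [MeasurableSpace α] {μ : Measure α}
  {p q : ℝ≥0∞} [p.HolderConjugate q] {n g : α → ℝ}

lemma lintegral_enorm_withDensity_le (hn : AEStronglyMeasurable n μ)
    (hg : AEStronglyMeasurable g μ) :
    ∫⁻ x, ‖g x‖ₑ ∂μ.withDensity (fun x => ENNReal.ofReal (n x)) ≤
      eLpNorm n p μ * eLpNorm g q μ := by
  rw [lintegral_withDensity_eq_lintegral_mul₀ hn.aemeasurable.ennreal_ofReal hg.enorm]
  calc ∫⁻ x, ENNReal.ofReal (n x) * ‖g x‖ₑ ∂μ ≤ ∫⁻ x, ‖n x * g x‖ₑ ∂μ :=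
        lintegral_mono fun x => by
          rw [enorm_mul]
          gcongr
          exact Real.ofReal_le_enorm _
    _ = eLpNorm (n • g) 1 μ := eLpNorm_one_eq_lintegral_enorm.symm
    _ ≤ eLpNorm n p μ * eLpNorm g q μ := eLpNorm_smul_le_mul_eLpNorm hg hn

lemma integrable_withDensity_of_memLp (hn : MemLp n p μ) (hg : MemLp g q μ) :
    Integrable g (μ.withDensity fun x => ENNReal.ofReal (n x)) :=
  ⟨hg.1.mono_ac (withDensity_absolutelyContinuous _ _),
    (lintegral_enorm_withDensity_le hn.1 hg.1).trans_lt
      (ENNReal.mul_lt_top hn.eLpNorm_lt_top hg.eLpNorm_lt_top)⟩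

lemma integral_withDensity_le_of_memLp (hn : MemLp n p μ) (hg : MemLp g q μ) :
    ∫ x, g x ∂μ.withDensity (fun x => ENNReal.ofReal (n x)) ≤
      (eLpNorm n p μ).toReal * (eLpNorm g q μ).toReal := by
  rw [← ENNReal.toReal_mul]
  refine (Real.le_norm_self _).trans ?_
  rw [← toReal_enorm]
  exact ENNReal.toReal_mono (ENNReal.mul_ne_top hn.eLpNorm_ne_top hg.eLpNorm_ne_top)
        ((enorm_integral_le_lintegral_enorm _).trans
          (lintegral_enorm_withDensity_le hn.1 hg.1))

end Holder

section LogPotential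

variable {p q : ℝ≥0∞} [p.HolderConjugate q] {n f : ℝ → ℝ}

lemma integrable_comp_sub_withDensity (hn : MemLp n p) (hf : MemLp f q) (z : ℝ) :
    Integrable (fun x => f (z - x)) (volume.withDensity fun x => ENNReal.ofReal (n x)) :=
  integrable_withDensity_of_memLp hn
    (hf.comp_measurePreserving (Measure.measurePreserving_sub_left volume z))

lemma integral_comp_sub_withDensity_le (hn : MemLp n p) (hf : MemLp f q) (z : ℝ) :
    ∫ x, f (z - x) ∂volume.withDensity (fun x => ENNReal.ofReal (n x)) ≤
      (eLpNorm n p).toReal * (eLpNorm f q).toReal := by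
  have hsub := Measure.measurePreserving_sub_left volume z
  rw [← eLpNorm_comp_measurePreserving hf.1 hsub]
  exact integral_withDensity_le_of_memLp hn (hf.comp_measurePreserving hsub)

lemma integrable_log_abs_sub_and_abs_integral_le {ν : Measure ℝ} [IsProbabilityMeasure ν]
    {ε : ℝ} (hε : 0 < ε) (hν : ν = volume.withDensity fun x => ENNReal.ofReal (n x))
    (hn : MemLp n p) (hk : MemLp (truncAbsRpow (-ε)) q) (hx2 : Integrable (fun x => x ^ 2) ν)
    (z : ℝ) :
    Integrable (fun x => Real.log |z - x|) ν ∧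
      |∫ x, Real.log |z - x| ∂ν| ≤
        (eLpNorm n p).toReal * ((eLpNorm (truncAbsRpow (-ε)) q).toReal / ε) +
          (1 + z ^ 2 + ∫ x, x ^ 2 ∂ν) := by
  have hkν : Integrable (fun x => truncAbsRpow (-ε) (z - x)) ν :=
    hν ▸ integrable_comp_sub_withDensity hn hk z
  have hquad : Integrable (fun x => 1 + z ^ 2 + x ^ 2) ν := (integrable_const _).add hx2
  have hdom : Integrable (fun x => truncAbsRpow (-ε) (z - x) / ε + (1 + z ^ 2 + x ^ 2)) ν :=
    (hkν.div_const ε).add hquad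
  have hbound :
      ∀ x, ‖Real.log |z - x|‖ ≤ truncAbsRpow (-ε) (z - x) / ε + (1 + z ^ 2 + x ^ 2) :=
    abs_log_abs_sub_le hε z
  refine ⟨hdom.mono' (by fun_prop : Measurable fun x => Real.log |z - x|).aestronglyMeasurable
    (ae_of_all _ hbound), ?_⟩
  calc |∫ x, Real.log |z - x| ∂ν|
      ≤ ∫ x, truncAbsRpow (-ε) (z - x) / ε + (1 + z ^ 2 + x ^ 2) ∂ν :=
        norm_integral_le_of_norm_le hdom (ae_of_all _ hbound)
    _ = (∫ x, truncAbsRpow (-ε) (z - x) ∂ν) / ε + (1 + z ^ 2 + ∫ x, x ^ 2 ∂ν) := by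
        rw [integral_add (hkν.div_const ε) hquad, integral_div,
          integral_add (integrable_const _) hx2, integral_const]
        simp
    _ ≤ _ := by
        rw [← mul_div_assoc]
        gcongr
        exact hν ▸ integral_comp_sub_withDensity_le hn hk z

end LogPotential

/-- The logarithmic potential estimate \eqref{minkowski} from the proof of Lemma
`chainrule`: for `1 < p < ∞` there is a constant `Cₚ > 0` such that for every probability
measure `ν` on `ℝ` with finite second moment and density `n ∈ Lᵖ(ℝ)`, and every `z ∈ ℝ`,
the integral `∫ log|z−x| ν(dx)` converges absolutely and is bounded by
`Cₚ (1 + ‖n‖_p + z² + ∫ x² ν(dx))`. -/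
theorem log_potential_bound (p : ℝ) (hp : 1 < p) :
    ∃ C : ℝ, 0 < C ∧
      ∀ (ν : Measure ℝ) (n : ℝ → ℝ), IsProbabilityMeasure ν →
        ν = (volume : Measure ℝ).withDensity (fun x => ENNReal.ofReal (n x)) →
        MemLp n (ENNReal.ofReal p) (volume : Measure ℝ) →
        Integrable (fun x => x ^ 2) ν →
        ∀ z : ℝ,
          Integrable (fun x => Real.log |z - x|) ν ∧
          |∫ x, Real.log |z - x| ∂ν|
            ≤ C * (1 + (eLpNorm n (ENNReal.ofReal p) volume).toReal
                + z ^ 2 + ∫ x, x ^ 2 ∂ν) := by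
  set q := p.conjExponent
  have hpq := (Real.HolderConjugate.conjExponent hp).ennrealOfReal
  have hq : 0 < q := (Real.HolderConjugate.conjExponent hp).symm.pos
  set ε := (2 * q)⁻¹
  have hε : 0 < ε := by positivity
  have hk : MemLp (truncAbsRpow (-ε)) (ENNReal.ofReal q) :=
    memLp_truncAbsRpow hq (by simp only [ε]; field_simp; norm_num)
  set c := (eLpNorm (truncAbsRpow (-ε)) (ENNReal.ofReal q)).toReal / ε
  have hc : 0 ≤ c := by positivity
  refine ⟨1 + c, by positivity, fun ν n _ hν hn hx2 z => ?_⟩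
  obtain ⟨hint, hle⟩ := integrable_log_abs_sub_and_abs_integral_le hε hν hn hk hx2 z
  refine ⟨hint, hle.trans ?_⟩
  have hN : 0 ≤ (eLpNorm n (ENNReal.ofReal p)).toReal := ENNReal.toReal_nonneg
  nlinarith [mul_nonneg hc (by positivity : 0 ≤ 1 + z ^ 2 + ∫ x, x ^ 2 ∂ν)]
end

section
/- Let N ≥ 2 and β > 0, and define W_β on the open Weyl chamber 𝒲^N by W_β(x) := ‖x‖²/4 − (β/(2(N−1))) ∑_{1≤k<ℓ≤N} log(x^ℓ − x^k). Then there exists a constant M′ ∈ ℝ (depending on N and β) such that for all x ∈ 𝒲^N: W_β(x) ≥ −M′, and moreover W_β(x) + (β/(4(N−1))) log(x^ℓ − x^k) ≥ −M′ for every pair of indices 1 ≤ k < ℓ ≤ N. -/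
/-!
Since `log y ≤ y - 1 < y`, every logarithmic term `log (x l - x k)` is at most
`|x k| + |x l| ≤ 2 ‖x‖`. Hence the repulsion part of `W_β`, as well as what is left of it after
half of one of its terms is added back, is bounded above by `B ‖x‖` for a constant `B`, and
`‖x‖² / 4 - B ‖x‖ ≥ -B²`.
-/

open Finset

theorem Real.log_sub_le_two_mul_sqrt_sum_sq {ι : Type*} [Fintype ι] (x : ι → ℝ) {i j : ι}
    (hij : x i < x j) : Real.log (x j - x i) ≤ 2 * √(∑ k, x k ^ 2) := by
  have abs_le (k : ι) : |x k| ≤ √(∑ k, x k ^ 2) :=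
    Real.abs_le_sqrt (single_le_sum (f := fun k => x k ^ 2) (fun _ _ => sq_nonneg _) (mem_univ k))
  have hlog := Real.log_le_sub_one_of_pos (sub_pos.mpr hij)
  linarith [le_abs_self (x j), neg_abs_le (x i), abs_le i, abs_le j]

theorem Real.sum_log_sub_le_card_mul_sqrt_sum_sq {ι : Type*} [Fintype ι] (x : ι → ℝ)
    (s : Finset (ι × ι)) (hs : ∀ p ∈ s, x p.1 < x p.2) :
    ∑ p ∈ s, Real.log (x p.2 - x p.1) ≤ #s * (2 * √(∑ k, x k ^ 2)) := by
  simpa using sum_le_card_nsmul s _ _ fun p hp => Real.log_sub_le_two_mul_sqrt_sum_sq x (hs p hp)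

theorem neg_sq_le_sq_div_four_sub_mul (t B : ℝ) : -B ^ 2 ≤ t ^ 2 / 4 - B * t := by
  nlinarith [sq_nonneg (t / 2 - B)]

/-- The Lyapunov-type lower bound \eqref{lyapunovinequality} from the proof of the closed
loop Verification Theorem: there is a constant `M′` (depending on `N, β`) such that on the
Weyl chamber `W_β(x) ≥ −M′` and `W_β(x) + (β/(4(N−1))) log(x^ℓ − x^k) ≥ −M′` for all
`k < ℓ`. -/
theorem dyson_potential_lyapunov_bound (N : ℕ) (hN : 2 ≤ N) (β : ℝ) (hβ : 0 < β)
    (Wset : Set (Fin N → ℝ)) (hWset : Wset = {x | StrictMono x})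
    (Wβ : (Fin N → ℝ) → ℝ)
    (hWβ : ∀ x, Wβ x = (∑ i, (x i) ^ 2) / 4
      - β / (2 * ((N : ℝ) - 1)) *
          ∑ p ∈ univ.filter (fun p : Fin N × Fin N => p.1 < p.2), Real.log (x p.2 - x p.1)) :
    ∃ M' : ℝ, ∀ x ∈ Wset,
      -M' ≤ Wβ x ∧
      ∀ k l : Fin N, k < l →
        -M' ≤ Wβ x + β / (4 * ((N : ℝ) - 1)) * Real.log (x l - x k) := by
  set c := β / (2 * ((N : ℝ) - 1))
  have hc : 0 ≤ c := div_nonneg hβ.le (by linarith [show (2 : ℝ) ≤ N by exact_mod_cast hN])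
  have hc_half : β / (4 * ((N : ℝ) - 1)) = c / 2 := by rw [div_div]; congr 1; ring
  set pairs := univ.filter (fun p : Fin N × Fin N => p.1 < p.2)
  set B := c * (#pairs * 2)
  refine ⟨B ^ 2, fun x hx => ?_⟩
  rw [hWset] at hx
  set t := √(∑ i, x i ^ 2)
  have ordered (s : Finset (Fin N × Fin N)) (hs : s ⊆ pairs) : ∀ p ∈ s, x p.1 < x p.2 :=
    fun p hp => hx (mem_filter.mp (hs hp)).2
  have hL : ∑ p ∈ pairs, Real.log (x p.2 - x p.1) ≤ #pairs * (2 * t) :=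
    Real.sum_log_sub_le_card_mul_sqrt_sum_sq x pairs (ordered pairs subset_rfl)
  have hW : Wβ x = t ^ 2 / 4 - c * ∑ p ∈ pairs, Real.log (x p.2 - x p.1) := by
    rw [hWβ x, Real.sq_sqrt (sum_nonneg fun _ _ => sq_nonneg _)]
  have hB := neg_sq_le_sq_div_four_sub_mul t B
  refine ⟨by nlinarith [mul_le_mul_of_nonneg_left hL hc], fun k l hkl => ?_⟩
  have hkl_mem : (k, l) ∈ pairs := mem_filter.mpr ⟨mem_univ _, hkl⟩
  have hL' : ∑ p ∈ pairs, Real.log (x p.2 - x p.1) - Real.log (x l - x k) ≤ #pairs * (2 * t) :=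
    calc _ = ∑ p ∈ pairs.erase (k, l), Real.log (x p.2 - x p.1) := (sum_erase_eq_sub hkl_mem).symm
      _ ≤ #(pairs.erase (k, l)) * (2 * t) :=
        Real.sum_log_sub_le_card_mul_sqrt_sum_sq x _ (ordered _ (erase_subset _ _))
      _ ≤ #pairs * (2 * t) := by gcongr; exact erase_subset _ _
  rw [hW, hc_half]
  nlinarith [mul_le_mul_of_nonneg_left (add_le_add hL hL') hc]
end
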